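/- arXiv:2408.12901 — 6 statements merged into one kernel-verified Lean document; each statement's English description precedes it below -/
import Mathlib

section
/- Let G be a finite abelian group with the uniformly periodic tiling (UPT) property, and let m be a square-free positive integer with gcd(|G|, m) = 1. Then the direct product group G × Z_m also has the uniformly periodic tiling (UPT) property. -/
/-- `(Ω, T)` is a tiling pair of the abelian group `G`: every element of `G`
has a unique representation `ω + t` with `ω ∈ Ω`, `t ∈ T`. -/
def IsTilingPair {G : Type*} [AddCommGroup G] (Ω T : Set G) : Prop :=
  ∀ g : G, ∃! p : G × G, p.1 ∈ Ω ∧ p.2 ∈ T ∧ p.1 + p.2 = g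

/-- A nonempty subset `A` of `G` is periodic if `A + g = A` for some nonzero `g`. -/
def IsPeriodic {G : Type*} [AddCommGroup G] (A : Set G) : Prop :=
  A.Nonempty ∧ ∃ g : G, g ≠ 0 ∧ (fun a => a + g) '' A = A

/-- `Ω` is a tile of `G` if it has a tiling complement. -/
def IsTile {G : Type*} [AddCommGroup G] (Ω : Set G) : Prop :=
  ∃ T : Set G, IsTilingPair Ω T

/-- `G` has the periodic tiling (PT) property: for every tiling pair `(Ω, T)`,
either `Ω` is periodic, or `T` can be replaced by a periodic tiling complement. -/
def HasPT (G : Type*) [AddCommGroup G] : Prop :=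
  ∀ Ω T : Set G, IsTilingPair Ω T →
    IsPeriodic Ω ∨ ∃ T' : Set G, IsPeriodic T' ∧ IsTilingPair Ω T'

/-- A tile `Ω` is uniformly periodic if all its tiling complements share a
common nonzero period. -/
def UniformlyPeriodic {G : Type*} [AddCommGroup G] (Ω : Set G) : Prop :=
  ∃ g : G, g ≠ 0 ∧ ∀ T : Set G, IsTilingPair Ω T → (fun t => t + g) '' T = T

/-- A tile `Ω` is dual uniformly periodic if there is a periodic tile `Ω'`
which is a tiling complement of every tiling complement of `Ω`. -/
def DualUniformlyPeriodic {G : Type*} [AddCommGroup G] (Ω : Set G) : Prop :=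
  ∃ Ω' : Set G, IsPeriodic Ω' ∧ IsTile Ω' ∧
    ∀ T : Set G, IsTilingPair Ω T → IsTilingPair Ω' T

/-- `G` has the uniformly periodic tiling (UPT) property: every tile of `G`
is either uniformly periodic or dual uniformly periodic. -/
def HasUPT (G : Type*) [AddCommGroup G] : Prop :=
  ∀ Ω : Set G, IsTile Ω → UniformlyPeriodic Ω ∨ DualUniformlyPeriodic Ω

/-!
Tijdeman's dilation theorem drives the proof: if `(Ω, T)` tiles and `k` is prime to `|T|`, then
`k • ·` is injective on `T` and `(Ω, k • T)` tiles; for a prime `k = q` this is a computation in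
`𝔽_q[H]`, where Frobenius turns `(∑_{t ∈ T} [t])^q` into `∑_{t ∈ T} [q t]`.

In `K × M` with `gcd(|K|, |M|) = 1` a suitable `k` acts as `(x, y) ↦ (x, 0)`. Dilating by it a tile
`Ω` with `gcd(|Ω|, |M|) = 1` shows that `Ω` projects injectively onto some `A ⊆ K` and that every
complement of `Ω` has all its `M`-columns complementary to `A`; so (dual) uniform periodicity of
`A` lifts to `Ω`.

For a tile `Ω` of `G × ℤ/m`, let `m₁ = gcd(m, |Ω|)` and `m₂ = m / m₁`; as `m` is squarefree,
`G × ℤ/m ≅ (G × ℤ/m₁) × ℤ/m₂` and `gcd(|Ω|, m₂) = 1`, so the above applies with `M = ℤ/m₂`. If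
`m₁ = 1`, then `A` lives in `G`, which has the UPT property. Otherwise `m₁ ∣ |A|` makes every
complement `C` of `A` of size prime to `m₁`, and flattening `C` shows that `A₀ × ℤ/m₁`, for any
column `A₀` of `A`, complements every such `C`: `A` is dual uniformly periodic.
-/

open Finset

section TilingPair

variable {H H' : Type*} [AddCommGroup H] [AddCommGroup H'] {Ω T : Set H}

theorem isTilingPair_iff_existsUnique_sub :
    IsTilingPair Ω T ↔ ∀ g, ∃! ω, ω ∈ Ω ∧ g - ω ∈ T := by
  refine forall_congr' fun g => ⟨?_, ?_⟩
  · rintro ⟨⟨ω, t⟩, ⟨hω, ht, rfl⟩, hu⟩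
    refine ⟨ω, ⟨hω, by simpa⟩, fun ω' ⟨hω', ht'⟩ => ?_⟩
    exact congrArg Prod.fst (hu (ω', ω + t - ω') ⟨hω', ht', add_sub_cancel _ _⟩)
  · rintro ⟨ω, ⟨hω, ht⟩, hu⟩
    refine ⟨(ω, g - ω), ⟨hω, ht, add_sub_cancel _ _⟩, ?_⟩
    rintro ⟨ω', t'⟩ ⟨hω', ht', rfl⟩
    obtain rfl := hu ω' ⟨hω', by simpa⟩
    simp

theorem IsTilingPair.symm (h : IsTilingPair Ω T) : IsTilingPair T Ω := by
  intro g
  obtain ⟨⟨ω, t⟩, ⟨hω, ht, rfl⟩, hu⟩ := h g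
  refine ⟨(t, ω), ⟨ht, hω, add_comm _ _⟩, ?_⟩
  rintro ⟨t', ω'⟩ ⟨ht', hω', hsum⟩
  simpa [and_comm] using hu (ω', t') ⟨hω', ht', by rw [add_comm, hsum, add_comm]⟩

theorem isTilingPair_comm : IsTilingPair Ω T ↔ IsTilingPair T Ω :=
  ⟨IsTilingPair.symm, IsTilingPair.symm⟩

theorem IsTilingPair.nonempty_left (h : IsTilingPair Ω T) : Ω.Nonempty :=
  let ⟨p, ⟨hp, _⟩, _⟩ := h 0
  ⟨p.1, hp⟩

theorem IsTilingPair.ncard_mul_ncard [Finite H] (h : IsTilingPair Ω T) :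
    Ω.ncard * T.ncard = Nat.card H := by
  rw [← Nat.card_coe_set_eq, ← Nat.card_coe_set_eq, ← Nat.card_prod]
  refine Nat.card_congr
    (Equiv.ofBijective (fun p : Ω × T => (p.1 : H) + p.2) ⟨?_, fun g => ?_⟩)
  · rintro ⟨⟨ω, hω⟩, ⟨t, ht⟩⟩ ⟨⟨ω', hω'⟩, ⟨t', ht'⟩⟩ hsum
    have := (h (ω + t)).unique (y₁ := (ω, t)) (y₂ := (ω', t'))
      ⟨hω, ht, rfl⟩ ⟨hω', ht', hsum.symm⟩
    simp_all
  · obtain ⟨⟨ω, t⟩, ⟨hω, ht, rfl⟩, -⟩ := h g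
    exact ⟨(⟨ω, hω⟩, ⟨t, ht⟩), rfl⟩

theorem isTilingPair_singleton_iff {t : H} : IsTilingPair Ω {t} ↔ Ω = Set.univ := by
  simp only [isTilingPair_iff_existsUnique_sub, Set.mem_singleton_iff, Set.eq_univ_iff_forall]
  refine ⟨fun h g => ?_, fun h g => ⟨g - t, ⟨h _, sub_sub_cancel _ _⟩, ?_⟩⟩
  · obtain ⟨ω, ⟨hω, hωt⟩, -⟩ := h (g + t)
    rw [sub_eq_iff_eq_add, add_comm g] at hωt
    exact add_left_cancel hωt ▸ hω
  · rintro ω ⟨-, rfl⟩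
    simp

theorem IsTilingPair.image (e : H ≃+ H') (h : IsTilingPair Ω T) :
    IsTilingPair (e '' Ω) (e '' T) := by
  rw [isTilingPair_iff_existsUnique_sub] at h ⊢
  refine fun g => (e.toEquiv.existsUnique_congr fun ω => ?_).mp (h (e.symm g))
  simp [← e.eq_symm_apply]

end TilingPair

section Transport

variable {H H' : Type*} [AddCommGroup H] [AddCommGroup H'] (e : H ≃+ H') {Ω : Set H}

theorem IsTile.image (h : IsTile Ω) : IsTile (e '' Ω) :=
  let ⟨T, hT⟩ := h
  ⟨e '' T, hT.image e⟩

theorem AddEquiv.image_add_image (A : Set H) (g : H) :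
    (· + e g) '' (e '' A) = e '' ((· + g) '' A) := by
  simp only [Set.image_image, map_add]

theorem IsPeriodic.image (h : IsPeriodic Ω) : IsPeriodic (e '' Ω) := by
  obtain ⟨hΩ, g, hg, hgΩ⟩ := h
  exact ⟨hΩ.image e, e g, by simpa using hg, by rw [e.image_add_image, hgΩ]⟩

theorem UniformlyPeriodic.of_image (h : UniformlyPeriodic (e '' Ω)) : UniformlyPeriodic Ω := by
  obtain ⟨g, hg, hgT⟩ := h
  refine ⟨e.symm g, by simpa using hg, fun T hT => e.injective.image_injective ?_⟩
  have := hgT _ (hT.image e)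
  rwa [← e.apply_symm_apply g, e.image_add_image] at this

theorem DualUniformlyPeriodic.of_image (h : DualUniformlyPeriodic (e '' Ω)) :
    DualUniformlyPeriodic Ω := by
  obtain ⟨Ω', hper, htile, hΩ'⟩ := h
  refine ⟨e.symm '' Ω', hper.image e.symm, htile.image e.symm, fun T hT => ?_⟩
  simpa [Set.image_image] using (hΩ' _ (hT.image e)).image e.symm

end Transport

theorem HasUPT.of_addEquiv {H H' : Type*} [AddCommGroup H] [AddCommGroup H'] (h : HasUPT H)
    (e : H ≃+ H') : HasUPT H' := fun _ hΩ =>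
  (h _ (hΩ.image e.symm)).imp (·.of_image e.symm) (·.of_image e.symm)

section GroupRing

open AddMonoidAlgebra

variable {R M α β : Type*} [Semiring R]

theorem AddMonoidAlgebra.coeff_sum_single_one [DecidableEq M] (s : Finset α) (f : α → M)
    (m : M) : (∑ x ∈ s, single (f x) (1 : R)).coeff m = #{x ∈ s | f x = m} := by
  simp [Finsupp.single_apply, Finset.sum_boole]

theorem AddMonoidAlgebra.sum_single_one_mul_sum_single_one [AddMonoid M] (s : Finset α)
    (t : Finset β) (f : α → M) (f' : β → M) :
    (∑ x ∈ s, single (f x) (1 : R)) * ∑ y ∈ t, single (f' y) 1 =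
      ∑ p ∈ s ×ˢ t, single (f p.1 + f' p.2) 1 := by
  simp [Finset.sum_mul_sum, single_mul_single, Finset.sum_product]

end GroupRing

theorem Finset.card_filter_eq_one_of_modEq {α β : Type*} [Fintype β] [DecidableEq β]
    {s : Finset α} {f : α → β} {q : ℕ} (hq : q ≠ 1) (hs : #s = Fintype.card β)
    (h : ∀ b, #{a ∈ s | f a = b} ≡ 1 [MOD q]) (b : β) : #{a ∈ s | f a = b} = 1 := by
  have hpos (b) : 1 ≤ #{a ∈ s | f a = b} := Nat.one_le_iff_ne_zero.mpr fun h0 =>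
    hq (Nat.dvd_one.mp (Nat.modEq_zero_iff_dvd.mp (h0 ▸ (h b).symm)))
  have hsum : ∑ b, #{a ∈ s | f a = b} = ∑ _b : β, 1 := by
    rw [← Finset.card_eq_sum_card_fiberwise (fun a _ => Finset.mem_univ (f a)), hs,
      Fintype.card_eq_sum_ones]
  exact ((Finset.sum_eq_sum_iff_of_le fun b _ => hpos b).mp hsum.symm b (mem_univ b)).symm

section Dilation

open AddMonoidAlgebra

variable {H : Type*} [AddCommGroup H]

theorem isTilingPair_coe_iff_card_filter [DecidableEq H] {Ω T : Finset H} :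
    IsTilingPair (Ω : Set H) T ↔ ∀ g, #{p ∈ Ω ×ˢ T | p.1 + p.2 = g} = 1 := by
  refine forall_congr' fun g => ?_
  rw [Finset.card_eq_one_iff_existsUnique]
  simp [and_assoc]

theorem IsTilingPair.card_filter_nsmul_add_modEq [Fintype H] [DecidableEq H] {Ω T : Finset H}
    (h : IsTilingPair (Ω : Set H) T) {q : ℕ} (hq : q.Prime) (hT : ¬ q ∣ #T) (g : H) :
    #{p ∈ T ×ˢ Ω | q • p.1 + p.2 = g} ≡ 1 [MOD q] := by
  -- Frobenius gives `δ T ^ q = ∑ [q • t]`, and `δ T ^ q * δ Ω = |T| ^ (q - 1) • δ univ = δ univ`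
  -- by Fermat; the claim is the coefficient of `g` in `key`.
  have := Fact.mk hq
  have : CharP (ZMod q)[H] q := charP_of_injective_algebraMap' (ZMod q) q
  set δ : Finset H → (ZMod q)[H] := fun s => ∑ x ∈ s, single x 1 with hδ
  have hTΩ : δ T * δ Ω = δ univ := by
    ext g
    rw [hδ, sum_single_one_mul_sum_single_one, coeff_sum_single_one, coeff_sum_single_one,
      isTilingPair_coe_iff_card_filter.mp h.symm g]
    simp [Finset.filter_eq']
  have hone : ∀ x : H, single x (1 : ZMod q) * δ univ = δ univ := fun x => by
    simp only [hδ, Finset.mul_sum, single_mul_single, one_mul]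
    exact Fintype.sum_equiv (Equiv.addLeft x) _ _ fun _ => rfl
  have habsorb : ∀ s, δ s * δ univ = (#s : ZMod q) • δ univ := fun s => by
    rw [hδ]
    dsimp only
    rw [Finset.sum_mul, Finset.sum_congr rfl fun x _ => hone x, Finset.sum_const,
      Nat.cast_smul_eq_nsmul]
  have hpow : ∀ n, δ T ^ n * δ univ = (#T : ZMod q) ^ n • δ univ := fun n => by
    induction n with
    | zero => simp
    | succ n ih => rw [pow_succ, mul_assoc, habsorb, mul_smul_comm, ih, smul_smul, pow_succ']
  have key : (∑ t ∈ T, single (q • t) (1 : ZMod q)) * δ Ω = δ univ := calc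
    _ = δ T ^ q * δ Ω := by simp [hδ, sum_pow_char, single_pow]
    _ = δ T ^ (q - 1) * (δ T * δ Ω) := by
      rw [← mul_assoc, ← pow_succ, Nat.sub_add_cancel hq.one_le]
    _ = δ univ := by
      rw [hTΩ, hpow, ZMod.pow_card_sub_one_eq_one (by simpa [ZMod.natCast_eq_zero_iff] using hT),
        one_smul]
  have := congrArg (·.coeff g) key
  simp only [hδ, sum_single_one_mul_sum_single_one, coeff_sum_single_one] at this
  exact (ZMod.natCast_eq_natCast_iff _ _ _).mp (by simpa [Finset.filter_eq'] using this)

variable {Ω T : Set H}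

theorem injOn_and_isTilingPair_image_of_existsUnique {f : H → H} (hΩ : Ω.Nonempty)
    (h : ∀ g, ∃! p : H × H, (p.1 ∈ T ∧ p.2 ∈ Ω) ∧ f p.1 + p.2 = g) :
    Set.InjOn f T ∧ IsTilingPair Ω (f '' T) := by
  refine ⟨fun t ht t' ht' htt' => ?_, fun g => ?_⟩
  · obtain ⟨ω, hω⟩ := hΩ
    have := (h (f t + ω)).unique (y₁ := (t, ω)) (y₂ := (t', ω))
      ⟨⟨ht, hω⟩, rfl⟩ ⟨⟨ht', hω⟩, by rw [htt']⟩
    simpa using this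
  · obtain ⟨⟨t, ω⟩, ⟨⟨ht, hω⟩, rfl⟩, hu⟩ := h g
    refine ⟨(ω, f t), ⟨hω, ⟨t, ht, rfl⟩, add_comm _ _⟩, ?_⟩
    rintro ⟨ω', _⟩ ⟨hω', ⟨t', ht', rfl⟩, hsum⟩
    obtain ⟨rfl, rfl⟩ := Prod.ext_iff.mp (hu (t', ω') ⟨⟨ht', hω'⟩, by rw [add_comm, hsum]⟩)
    rfl

theorem IsTilingPair.image_nsmul_of_prime [Finite H] (h : IsTilingPair Ω T) {q : ℕ}
    (hq : q.Prime) (hT : ¬ q ∣ T.ncard) : Set.InjOn (q • ·) T ∧ IsTilingPair Ω ((q • ·) '' T) := by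
  classical
  have := Fintype.ofFinite H
  have hcard := h.symm.ncard_mul_ncard
  obtain ⟨Ω, rfl⟩ := Ω.toFinite.exists_finset_coe
  obtain ⟨T, rfl⟩ := T.toFinite.exists_finset_coe
  rw [Set.ncard_coe_finset] at hT hcard
  rw [Set.ncard_coe_finset, Nat.card_eq_fintype_card, ← Finset.card_product] at hcard
  refine injOn_and_isTilingPair_image_of_existsUnique h.nonempty_left fun g => ?_
  have := Finset.card_filter_eq_one_of_modEq hq.ne_one hcard
    (h.card_filter_nsmul_add_modEq hq hT) g
  simpa [Finset.card_eq_one_iff_existsUnique] using this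

theorem IsTilingPair.image_nsmul_of_coprime [Finite H] (h : IsTilingPair Ω T) {k : ℕ}
    (hk : k.Coprime T.ncard) : Set.InjOn (k • ·) T ∧ IsTilingPair Ω ((k • ·) '' T) := by
  induction k using induction_on_primes generalizing T with
  | zero =>
    obtain ⟨t, rfl⟩ := Set.ncard_eq_one.mp (Nat.coprime_zero_left _ |>.mp hk)
    obtain rfl := isTilingPair_singleton_iff.mp h
    simp [isTilingPair_singleton_iff]
  | one => simpa using h
  | prime_mul p k hp ih =>
    obtain ⟨hinjp, hp⟩ :=
      h.image_nsmul_of_prime hp (hp.coprime_iff_not_dvd.mp (Nat.Coprime.coprime_mul_right hk))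
    obtain ⟨hinjk, hk⟩ := ih hp (hinjp.ncard_image ▸ Nat.Coprime.coprime_mul_left hk)
    have hcomp : (fun t : H => (p * k) • t) = (k • ·) ∘ (p • ·) := funext fun t => by
      simp [mul_comm p k, mul_smul]
    rw [hcomp, Set.image_comp]
    exact ⟨hinjk.comp hinjp (Set.mapsTo_image _ _), hk⟩

end Dilation

def column {K M : Type*} (T : Set (K × M)) (y : M) : Set K := {x | (x, y) ∈ T}

section Slicing

variable {K M : Type*} [AddCommGroup K] [AddCommGroup M]

theorem isTilingPair_prod_singleton_zero_iff {A : Set K} {T : Set (K × M)} :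
    IsTilingPair (A ×ˢ {0}) T ↔ ∀ y, IsTilingPair A (column T y) := by
  simp only [isTilingPair_iff_existsUnique_sub, Prod.forall]
  rw [forall_comm]
  refine forall₂_congr fun y x => ⟨?_, ?_⟩
  · rintro ⟨⟨a, _⟩, ⟨⟨ha, rfl⟩, hT⟩, hu⟩
    refine ⟨a, ⟨ha, by simpa [column] using hT⟩, fun a' ⟨ha', hT'⟩ => ?_⟩
    exact congrArg Prod.fst (hu (a', 0) ⟨⟨ha', rfl⟩, by simpa [column] using hT'⟩)
  · rintro ⟨a, ⟨ha, hT⟩, hu⟩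
    refine ⟨(a, 0), ⟨⟨ha, rfl⟩, by simpa [column] using hT⟩, ?_⟩
    rintro ⟨a', _⟩ ⟨⟨ha', rfl⟩, hT'⟩
    rw [hu a' ⟨ha', by simpa [column] using hT'⟩]

theorem isTilingPair_prod_univ_of_injOn_fst {A : Set K} {C : Set (K × M)}
    (hC : Set.InjOn Prod.fst C) (h : IsTilingPair A (Prod.fst '' C)) :
    IsTilingPair (A ×ˢ Set.univ) C := by
  rw [isTilingPair_comm, isTilingPair_iff_existsUnique_sub] at h ⊢
  rintro ⟨x, y⟩
  obtain ⟨_, ⟨⟨c, hc, rfl⟩, hxc⟩, hu⟩ := h x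
  exact ⟨c, ⟨hc, hxc, trivial⟩,
    fun c' ⟨hc', hxc', _⟩ => hC hc' hc (hu _ ⟨⟨c', hc', rfl⟩, hxc'⟩)⟩

theorem image_add_prod_zero_eq {T : Set (K × M)} {g : K}
    (h : ∀ y, (· + g) '' column T y = column T y) : (· + (g, (0 : M))) '' T = T := by
  simp only [Set.image_add_right, Set.ext_iff, Set.mem_preimage, column, Set.mem_ofPred_eq]
    at h ⊢
  rintro ⟨x, y⟩
  simpa using h y x

theorem IsPeriodic.prod_left {A : Set K} {B : Set M} (hA : IsPeriodic A) (hB : B.Nonempty) :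
    IsPeriodic (A ×ˢ B) := by
  obtain ⟨hA, g, hg, hgA⟩ := hA
  refine ⟨hA.prod hB, (g, 0), by simpa using hg, ?_⟩
  simp only [Set.image_add_right, Set.ext_iff, Set.mem_preimage] at hgA ⊢
  rintro ⟨x, y⟩
  simp [hgA]

theorem IsPeriodic.prod_right {A : Set K} {B : Set M} (hA : A.Nonempty) (hB : IsPeriodic B) :
    IsPeriodic (A ×ˢ B) := by
  obtain ⟨hB, g, hg, hgB⟩ := hB
  refine ⟨hA.prod hB, (0, g), by simpa using hg, ?_⟩
  simp only [Set.image_add_right, Set.ext_iff, Set.mem_preimage] at hgB ⊢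
  rintro ⟨x, y⟩
  simp [hgB]

theorem isPeriodic_univ [Nontrivial M] : IsPeriodic (Set.univ : Set M) :=
  let ⟨g, hg⟩ := exists_ne (0 : M)
  ⟨Set.univ_nonempty, g, hg, Set.image_univ_of_surjective (add_right_surjective g)⟩

end Slicing

section Flattening

variable {K M : Type*} [AddCommGroup K] [AddCommGroup M] [Finite K]

theorem natCard_pow_totient_nsmul (h : (Nat.card K).Coprime (Nat.card M)) (z : K × M) :
    (Nat.card M ^ (Nat.card K).totient) • z = (z.1, 0) := by
  have hdvd : Nat.card M ∣ Nat.card M ^ (Nat.card K).totient :=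
    dvd_pow_self _ (Nat.totient_pos.mpr Nat.card_pos).ne'
  refine Prod.ext ?_
    (addOrderOf_dvd_iff_nsmul_eq_zero.mp ((addOrderOf_dvd_natCard _).trans hdvd))
  rw [Prod.smul_fst, ← mod_natCard_nsmul, Nat.ModEq.pow_totient h.symm, mod_natCard_nsmul,
    one_nsmul]

theorem IsTilingPair.flatten [Finite M] (hKM : (Nat.card K).Coprime (Nat.card M))
    {Ω T : Set (K × M)} (hΩ : Ω.ncard.Coprime (Nat.card M)) (h : IsTilingPair Ω T) :
    Set.InjOn Prod.fst Ω ∧ IsTilingPair ((Prod.fst '' Ω) ×ˢ {0}) T := by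
  have hk : ((Nat.card M ^ (Nat.card K).totient) • · : K × M → K × M) = fun z => (z.1, 0) :=
    funext (natCard_pow_totient_nsmul hKM)
  obtain ⟨hinj, htile⟩ := h.symm.image_nsmul_of_coprime (hΩ.pow_right _).symm
  rw [hk] at hinj htile
  refine ⟨fun z hz z' hz' hzz' => hinj hz hz' (by simp [hzz']), ?_⟩
  convert htile.symm using 1
  ext ⟨x, y⟩
  simp [eq_comm, and_comm]

end Flattening

section Lifting

variable {K M : Type*} [AddCommGroup K] [AddCommGroup M] {A : Set K} {Ω : Set (K × M)}

theorem UniformlyPeriodic.of_forall_isTilingPair_prod_zero (hA : UniformlyPeriodic A)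
    (h : ∀ T, IsTilingPair Ω T → IsTilingPair (A ×ˢ {0}) T) : UniformlyPeriodic Ω := by
  obtain ⟨g, hg, hgA⟩ := hA
  exact ⟨(g, 0), by simpa using hg, fun T hT => image_add_prod_zero_eq fun y =>
    hgA _ (isTilingPair_prod_singleton_zero_iff.mp (h T hT) y)⟩

theorem DualUniformlyPeriodic.of_forall_isTilingPair_prod_zero (hA : DualUniformlyPeriodic A)
    (hΩ : IsTile Ω) (h : ∀ T, IsTilingPair Ω T → IsTilingPair (A ×ˢ {0}) T) :
    DualUniformlyPeriodic Ω := by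
  obtain ⟨A', hA'per, -, hA'⟩ := hA
  have key (T) (hT : IsTilingPair Ω T) : IsTilingPair (A' ×ˢ {0}) T :=
    isTilingPair_prod_singleton_zero_iff.mpr fun y =>
      hA' _ (isTilingPair_prod_singleton_zero_iff.mp (h T hT) y)
  obtain ⟨T₀, hT₀⟩ := hΩ
  exact ⟨A' ×ˢ {0}, hA'per.prod_left (Set.singleton_nonempty 0), ⟨T₀, key T₀ hT₀⟩, key⟩

theorem dualUniformlyPeriodic_of_card_dvd_ncard [Finite K] [Finite M] [Nontrivial M]
    (hKM : (Nat.card K).Coprime (Nat.card M)) {A : Set (K × M)} (hA : IsTile A)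
    (hdvd : Nat.card M ∣ A.ncard) : DualUniformlyPeriodic A := by
  obtain ⟨T₀, hT₀⟩ := hA
  obtain ⟨a, ha⟩ := hT₀.nonempty_left
  have key (C) (hC : IsTilingPair A C) : IsTilingPair (column A a.2 ×ˢ Set.univ) C := by
    have hC_dvd : C.ncard ∣ Nat.card K := by
      obtain ⟨j, hj⟩ := hdvd
      have := hC.ncard_mul_ncard
      rw [Nat.card_prod, hj, mul_assoc, mul_comm (Nat.card K)] at this
      exact Dvd.intro_left j (Nat.eq_of_mul_eq_mul_left Nat.card_pos this)
    obtain ⟨hinj, hCA⟩ := hC.symm.flatten hKM (hKM.coprime_dvd_left hC_dvd)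
    exact isTilingPair_prod_univ_of_injOn_fst hinj
      (isTilingPair_prod_singleton_zero_iff.mp hCA a.2).symm
  exact ⟨_, isPeriodic_univ.prod_right ⟨a.1, ha⟩, ⟨T₀, key T₀ hT₀⟩, key⟩

end Lifting

theorem uniformlyPeriodic_or_dualUniformlyPeriodic_of_coprime {G : Type*} [AddCommGroup G]
    [Finite G] (hUPT : HasUPT G) {m₁ m₂ : ℕ} [NeZero m₁] [NeZero m₂]
    (hG : (Nat.card G).Coprime (m₁ * m₂)) (hm : m₁.Coprime m₂)
    {Ω : Set ((G × ZMod m₁) × ZMod m₂)} (hΩ : IsTile Ω) (hm₁ : m₁ ∣ Ω.ncard)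
    (hm₂ : Ω.ncard.Coprime m₂) : UniformlyPeriodic Ω ∨ DualUniformlyPeriodic Ω := by
  have hKM : (Nat.card (G × ZMod m₁)).Coprime (Nat.card (ZMod m₂)) := by
    rw [Nat.card_prod, Nat.card_zmod, Nat.card_zmod]
    exact Nat.Coprime.mul_left (Nat.Coprime.coprime_mul_left_right hG) hm
  have hflat (T) (hT : IsTilingPair Ω T) := hT.flatten hKM (by rwa [Nat.card_zmod])
  obtain ⟨T₀, hT₀⟩ := hΩ
  have hA : IsTile (Prod.fst '' Ω) :=
    ⟨_, isTilingPair_prod_singleton_zero_iff.mp (hflat T₀ hT₀).2 0⟩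
  have hA_UPT : UniformlyPeriodic (Prod.fst '' Ω) ∨ DualUniformlyPeriodic (Prod.fst '' Ω) := by
    rcases eq_or_ne m₁ 1 with rfl | h1
    · exact hUPT.of_addEquiv AddEquiv.prodUnique.symm _ hA
    · have := ZMod.nontrivial_iff.mpr h1
      refine .inr (dualUniformlyPeriodic_of_card_dvd_ncard ?_ hA ?_)
      · rw [Nat.card_zmod]
        exact Nat.Coprime.coprime_mul_right_right hG
      · rwa [Nat.card_zmod, (hflat T₀ hT₀).1.ncard_image]
  exact hA_UPT.imp (·.of_forall_isTilingPair_prod_zero fun T hT => (hflat T hT).2)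
    (·.of_forall_isTilingPair_prod_zero ⟨T₀, hT₀⟩ fun T hT => (hflat T hT).2)

/-- If `G` has the UPT property and `m` is squarefree with `gcd(|G|, m) = 1`,
then `G × Z_m` also has the UPT property. -/
theorem hasUPT_prod_of_hasUPT (G : Type*) [AddCommGroup G] [Fintype G]
    (m : ℕ) (hm : 0 < m) (hsq : Squarefree m)
    (hgcd : Nat.gcd (Fintype.card G) m = 1) (hUPT : HasUPT G) :
    HasUPT (G × ZMod m) := by
  have : NeZero m := ⟨hm.ne'⟩
  intro Ω hΩ
  set m₁ := m.gcd Ω.ncard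
  have hd : Ω.ncard ≠ 0 :=
    let ⟨_, hT⟩ := hΩ
    ((Set.ncard_pos (Set.toFinite _)).mpr hT.nonempty_left).ne'
  have hm₂ : (m / m₁).Coprime Ω.ncard := Nat.coprime_div_gcd_of_squarefree hsq hd
  have hm₁₂ : m₁.Coprime (m / m₁) := (hm₂.coprime_dvd_right (Nat.gcd_dvd_right m _)).symm
  have hmul : m₁ * (m / m₁) = m := Nat.mul_div_cancel' (Nat.gcd_dvd_left m _)
  have : NeZero m₁ := ⟨(Nat.gcd_pos_of_pos_left _ hm).ne'⟩
  have : NeZero (m / m₁) := ⟨right_ne_zero_of_mul (hmul.symm ▸ NeZero.ne m)⟩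
  let e : G × ZMod m ≃+ (G × ZMod m₁) × ZMod (m / m₁) :=
    (AddEquiv.prodCongr (.refl G)
      ((ZMod.ringEquivCongr hmul.symm).trans (ZMod.chineseRemainder hm₁₂)).toAddEquiv).trans
      AddEquiv.prodAssoc.symm
  have hcard : (e '' Ω).ncard = Ω.ncard := e.injective.injOn.ncard_image
  refine (uniformlyPeriodic_or_dualUniformlyPeriodic_of_coprime hUPT ?_ hm₁₂ (hΩ.image e)
    (hcard ▸ Nat.gcd_dvd_right m _) (hcard ▸ hm₂.symm)).imp (·.of_image e) (·.of_image e)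
  rw [hmul, Nat.card_eq_fintype_card]
  exact hgcd
end

section
/- Let G = H × S be the direct product of two finite abelian groups H and S, and let (Ω, T) be a tiling pair of H. Let φ : S → H be any function, and set K = {(φ(s), s) : s ∈ S} ⊆ G, Ω̃ = {(ω + φ(s), s) : ω ∈ Ω, s ∈ S} (i.e., Ω̃ = (Ω × {0}) + K), and T̃ = T × {0} ⊆ G. Then (Ω̃, T̃) is a tiling pair of G. Furthermore, if neither Ω (as a subset of H) nor K (as a subset of G) is periodic, then Ω̃ is not periodic. -/
/-- Construction of tiles of `H × S` from a tiling pair `(Ω, T)` of `H` and a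
graph-like set `K = {(φ(s), s) : s ∈ S}`: the pair `(Ω̃, T × {0})` with
`Ω̃ = (Ω × {0}) + K` is a tiling pair of `H × S`; moreover if neither `Ω`
nor `K` is periodic, then `Ω̃` is not periodic. -/
theorem tilingPair_prod_construction (H S : Type*)
    [AddCommGroup H] [Fintype H] [AddCommGroup S] [Fintype S]
    (Ω T : Set H) (hΩT : IsTilingPair Ω T) (φ : S → H)
    (K Ωt Tt : Set (H × S))
    (hK : K = {x : H × S | ∃ s : S, x = (φ s, s)})
    (hΩt : Ωt = {x : H × S | ∃ ω ∈ Ω, ∃ s : S, x = (ω + φ s, s)})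
    (hTt : Tt = (fun t => ((t, 0) : H × S)) '' T) :
    IsTilingPair Ωt Tt ∧
      (¬ IsPeriodic Ω → ¬ IsPeriodic K → ¬ IsPeriodic Ωt) := by
  have htp : IsTilingPair Ωt Tt := by
    intro g
    obtain ⟨p, ⟨hp1, hp2, hp3⟩, hpu⟩ := hΩT (g.1 - φ g.2)
    refine ⟨((p.1 + φ g.2, g.2), (p.2, 0)), ⟨?_, ?_, ?_⟩, ?_⟩
    · rw [hΩt]; exact ⟨p.1, hp1, g.2, rfl⟩
    · rw [hTt]; exact ⟨p.2, hp2, rfl⟩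
    · have : p.1 + φ g.2 + p.2 = g.1 := by
        rw [add_right_comm, hp3]; abel
      simp [Prod.ext_iff, this]
    · rintro ⟨q1, q2⟩ ⟨hq1, hq2, hq3⟩
      rw [hΩt] at hq1
      rw [hTt] at hq2
      obtain ⟨ω, hω, s, hs⟩ := hq1
      obtain ⟨t, ht, ht2⟩ := hq2
      subst hs
      subst ht2
      have hs2 : s = g.2 := by
        have := congrArg Prod.snd hq3
        simpa using this
      subst hs2
      have h1 : ω + t = g.1 - φ g.2 := by
        have := congrArg Prod.fst hq3
        simp at this
        rw [eq_sub_iff_add_eq, add_right_comm]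
        exact this
      have := hpu (ω, t) ⟨hω, ht, h1⟩
      have e1 : ω = p.1 := congrArg Prod.fst this
      have e2 : t = p.2 := congrArg Prod.snd this
      simp [e1, e2]
  refine ⟨htp, ?_⟩
  intro hΩ hKp hper
  obtain ⟨hne, p, hp0, hpim⟩ := hper
  have hΩne : Ω.Nonempty := by
    obtain ⟨q, ⟨hq1, _, _⟩, _⟩ := hΩT 0
    exact ⟨q.1, hq1⟩
  have hmem : ∀ x : H × S, x ∈ Ωt ↔ x + p ∈ Ωt := by
    intro x
    constructor
    · intro hx
      rw [← hpim]
      exact ⟨x, hx, rfl⟩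
    · intro hx
      rw [← hpim] at hx
      obtain ⟨y, hy, hyx⟩ := hx
      have : y = x := by
        have := hyx
        simpa using add_right_cancel this
      rwa [this] at hy
  have key : ∀ s : S, φ (s + p.2) = φ s + p.1 := by
    intro s
    by_contra hc
    apply hΩ
    refine ⟨hΩne, φ s + p.1 - φ (s + p.2), ?_, ?_⟩
    · intro h0
      rw [sub_eq_zero] at h0
      exact hc h0.symm
    · ext w
      constructor
      · rintro ⟨ω, hω, rfl⟩
        have hx : (ω + φ s, s) ∈ Ωt := by
          rw [hΩt]; exact ⟨ω, hω, s, rfl⟩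
        rw [hmem] at hx
        rw [hΩt] at hx
        obtain ⟨ω', hω', s', hs'⟩ := hx
        have hss : s' = s + p.2 := (congrArg Prod.snd hs').symm
        have hh : ω + φ s + p.1 = ω' + φ s' := congrArg Prod.fst hs'
        subst hss
        have heq : ω + (φ s + p.1 - φ (s + p.2)) = ω' := by
          rw [show ω + (φ s + p.1 - φ (s + p.2)) = ω + φ s + p.1 - φ (s + p.2) from by
            abel, hh]
          abel
        show ω + (φ s + p.1 - φ (s + p.2)) ∈ Ω
        rw [heq]; exact hω'
      · intro hw
        have hx : (w + φ (s + p.2), s + p.2) ∈ Ωt := by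
          rw [hΩt]; exact ⟨w, hw, s + p.2, rfl⟩
        have hx2 : (w + φ (s + p.2) - p.1, s) ∈ Ωt := by
          rw [hmem]
          have : ((w + φ (s + p.2) - p.1, s) : H × S) + p = (w + φ (s + p.2), s + p.2) := by
            simp [Prod.ext_iff]
          rw [this]; exact hx
        rw [hΩt] at hx2
        obtain ⟨ω, hω, s', hs'⟩ := hx2
        have hss : s' = s := (congrArg Prod.snd hs').symm
        rw [hss] at hs'
        have hh : w + φ (s + p.2) - p.1 = ω + φ s := congrArg Prod.fst hs'
        refine ⟨ω, hω, ?_⟩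
        show ω + (φ s + p.1 - φ (s + p.2)) = w
        rw [show ω + (φ s + p.1 - φ (s + p.2)) = (ω + φ s) + p.1 - φ (s + p.2) from by
          abel, ← hh]
        abel
  have hp2 : p.2 ≠ 0 := by
    intro h2
    have := key 0
    rw [h2, add_zero] at this
    have h1 : p.1 = 0 := by
      have := left_eq_add.mp this
      exact this
    exact hp0 (Prod.ext h1 h2)
  apply hKp
  refine ⟨⟨(φ 0, 0), by rw [hK]; exact ⟨0, rfl⟩⟩, p, hp0, ?_⟩
  ext x
  constructor
  · rintro ⟨y, hy, rfl⟩
    rw [hK] at hy ⊢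
    obtain ⟨s, rfl⟩ := hy
    exact ⟨s + p.2, by simp [Prod.ext_iff, key s]⟩
  · intro hx
    rw [hK] at hx
    obtain ⟨s, rfl⟩ := hx
    refine ⟨(φ (s - p.2), s - p.2), by rw [hK]; exact ⟨s - p.2, rfl⟩, ?_⟩
    have := key (s - p.2)
    rw [sub_add_cancel] at this
    simp [Prod.ext_iff, ← this]
end

section
/- Let H be a finite abelian group whose order is not a power of 2 (i.e., H is not a 2-group). If H does not have the periodic tiling (PT) property, then the group H × Z_2 does not have the periodic tiling (PT) property. -/
/-!
Choose `a ∈ H` of odd order `n > 1` and lift a counterexample `(Ω, T)` of `H` to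
`Ω̃ = Ω × {0} ∪ (a + Ω) × {1}`, which tiles `H × Z₂` together with `T × {0}`.

A period `(g, e)` of `Ω̃` yields the period `g` of `Ω` if `e = 0`, and the periods `g + a`
and `g - a` of `Ω` if `e = 1`; these cannot both vanish because `2a ≠ 0`.

If `S` is a complement of `Ω̃` with slices `S₀, S₁`, then `Ω ⊕ S₀ = P` (`IsDirectSum Ω S₀ P`)
and `Ω ⊕ (a + S₁) = H \ P` for some `P`. A period `(g, 0)` of `S` is a period of the complement
`S₀ ∪ (a + S₁)` of `Ω`. A period `(g, 1)` gives `S₁ = g + S₀`, so that `P + c = H \ P` for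
`c = a + g`; then `2c` is a period of `P`, hence `P + n c = H \ P` with `n c = n g`, and
`S₀ ∪ (n g + S₀)` is a complement of `Ω` with period `n g` (which is nonzero as `P ≠ H \ P`).
-/

open Set Pointwise

theorem ZMod.eq_zero_or_eq_one : ∀ e : ZMod 2, e = 0 ∨ e = 1 := by decide

section

variable {G : Type*} [AddCommGroup G]

def IsDirectSum (Ω A P : Set G) : Prop :=
  BijOn (fun p : G × G => p.1 + p.2) (Ω ×ˢ A) P

theorem isTilingPair_iff_isDirectSum_univ {Ω T : Set G} :
    IsTilingPair Ω T ↔ IsDirectSum Ω T univ := by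
  refine ⟨fun h => ⟨mapsTo_univ _ _, ?_, fun g _ => ?_⟩, fun h g => ?_⟩
  · rintro p ⟨hp₁, hp₂⟩ q ⟨hq₁, hq₂⟩ hpq
    exact (h (p.1 + p.2)).unique ⟨hp₁, hp₂, rfl⟩ ⟨hq₁, hq₂, hpq.symm⟩
  · obtain ⟨p, ⟨hp₁, hp₂, hp⟩, -⟩ := h g
    exact ⟨p, ⟨hp₁, hp₂⟩, hp⟩
  · obtain ⟨p, ⟨hp₁, hp₂⟩, hp⟩ := h.surjOn (mem_univ g)
    exact ⟨p, ⟨hp₁, hp₂, hp⟩, fun q ⟨hq₁, hq₂, hq⟩ =>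
      h.injOn ⟨hq₁, hq₂⟩ ⟨hp₁, hp₂⟩ (hq.trans hp.symm)⟩

theorem IsTilingPair.nonempty_right {Ω T : Set G} (h : IsTilingPair Ω T) : T.Nonempty :=
  let ⟨p, ⟨_, hp, _⟩, _⟩ := h 0; ⟨p.2, hp⟩

theorem isPeriodic_iff {A : Set G} :
    IsPeriodic A ↔ A.Nonempty ∧ ∃ g : G, g ≠ 0 ∧ g +ᵥ A = A := by
  have (g : G) : (fun a => a + g) '' A = g +ᵥ A := by
    simp_rw [add_comm _ g]; rfl
  simp only [IsPeriodic, this]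

namespace IsDirectSum

variable {Ω A B P Q : Set G}

theorem comm (h : IsDirectSum Ω A P) : IsDirectSum A Ω P := by
  have hswap : BijOn Prod.swap (A ×ˢ Ω) (Ω ×ˢ A) :=
    ⟨fun p hp => hp.symm, Prod.swap_injective.injOn, fun p hp => ⟨p.swap, hp.symm, rfl⟩⟩
  have hadd : (fun p : G × G => p.1 + p.2) = (fun p : G × G => p.1 + p.2) ∘ Prod.swap :=
    funext fun p => add_comm _ _
  unfold IsDirectSum
  rw [hadd]
  exact h.comp hswap

theorem eq (hP : IsDirectSum Ω A P) (hQ : IsDirectSum Ω A Q) : P = Q :=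
  hP.image_eq.symm.trans hQ.image_eq

theorem vadd (h : IsDirectSum Ω A P) (c : G) : IsDirectSum Ω (c +ᵥ A) (c +ᵥ P) := by
  refine ⟨?_, ?_, ?_⟩
  · rintro ⟨ω, _⟩ ⟨hω, t, ht, rfl⟩
    exact ⟨ω + t, h.mapsTo (x := (ω, t)) ⟨hω, ht⟩, by simp only [vadd_eq_add]; abel⟩
  · rintro ⟨ω, t⟩ ⟨hω, ht⟩ ⟨ω', t'⟩ ⟨hω', ht'⟩ hsum
    rw [mem_vadd_set_iff_neg_vadd_mem, vadd_eq_add] at ht ht'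
    have := h.injOn (x₁ := (ω, -c + t)) (x₂ := (ω', -c + t')) ⟨hω, ht⟩ ⟨hω', ht'⟩ (by
      simp only [add_left_comm _ (-c)] at hsum ⊢; rw [hsum])
    simpa using this
  · rintro _ ⟨x, hx, rfl⟩
    obtain ⟨⟨ω, t⟩, ⟨hω, ht⟩, rfl⟩ := h.surjOn hx
    exact ⟨(ω, c + t), ⟨hω, t, ht, rfl⟩, by simp only [vadd_eq_add]; abel⟩

theorem union (hA : IsDirectSum Ω A P) (hB : IsDirectSum Ω B Q) (hPQ : Disjoint P Q) :
    IsDirectSum Ω (A ∪ B) (P ∪ Q) := by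
  have hdisj : Disjoint (Ω ×ˢ A) (Ω ×ˢ B) :=
    Disjoint.of_image (f := fun p : G × G => p.1 + p.2) (hA.image_eq ▸ hB.image_eq ▸ hPQ)
  rw [IsDirectSum, prod_union]
  refine BijOn.union hA hB ((injOn_union hdisj).mpr ⟨hA.injOn, hB.injOn, ?_⟩)
  exact fun x hx y hy => hPQ.ne_of_mem (hA.mapsTo hx) (hB.mapsTo hy)

theorem isTilingPair_union_compl (hA : IsDirectSum Ω A P) (hB : IsDirectSum Ω B Pᶜ) :
    IsTilingPair Ω (A ∪ B) :=
  isTilingPair_iff_isDirectSum_univ.mpr (union_compl_self P ▸ hA.union hB disjoint_compl_right)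

theorem odd_nsmul_vadd {c : G} (hA : IsDirectSum Ω A P) (hc : IsDirectSum Ω (c +ᵥ A) Pᶜ)
    {n : ℕ} (hn : Odd n) : IsDirectSum Ω (n • c +ᵥ A) Pᶜ := by
  have hcP : c +ᵥ P = Pᶜ := (hA.vadd c).eq hc
  have h2c : 2 • c ∈ AddAction.stabilizer G P := by
    rw [AddAction.mem_stabilizer_iff, two_nsmul, add_vadd, hcP, vadd_set_compl, hcP, compl_compl]
  obtain ⟨k, rfl⟩ := hn
  have hnc : (2 * k + 1) • c = c + k • (2 • c) := by
    rw [add_nsmul, one_nsmul, mul_nsmul, add_comm]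
  have hnP : (2 * k + 1) • c +ᵥ P = Pᶜ := by
    rw [hnc, add_vadd, AddAction.mem_stabilizer_iff.mp (nsmul_mem h2c k), hcP]
  simpa only [hnP] using hA.vadd ((2 * k + 1) • c)

theorem prod_singleton {K : Type*} [AddCommGroup K] (h : IsDirectSum Ω A P) (e e' : K) :
    IsDirectSum (Ω ×ˢ {e}) (A ×ˢ {e'}) (P ×ˢ {e + e'}) := by
  refine ⟨?_, ?_, ?_⟩
  · rintro ⟨⟨ω, _⟩, ⟨t, _⟩⟩ ⟨⟨hω, rfl⟩, ⟨ht, rfl⟩⟩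
    exact ⟨h.mapsTo (x := (ω, t)) ⟨hω, ht⟩, rfl⟩
  · rintro ⟨⟨ω, _⟩, ⟨t, _⟩⟩ ⟨⟨hω, rfl⟩, ⟨ht, rfl⟩⟩ ⟨⟨ω', _⟩, ⟨t', _⟩⟩ ⟨⟨hω', rfl⟩, ⟨ht', rfl⟩⟩
      hsum
    have := h.injOn (x₁ := (ω, t)) (x₂ := (ω', t')) ⟨hω, ht⟩ ⟨hω', ht'⟩ (congrArg Prod.fst hsum)
    simp_all
  · rintro ⟨x, _⟩ ⟨hx, rfl⟩
    obtain ⟨⟨ω, t⟩, ⟨hω, ht⟩, rfl⟩ := h.surjOn hx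
    exact ⟨((ω, e), (t, e')), ⟨⟨hω, rfl⟩, ⟨ht, rfl⟩⟩, rfl⟩

end IsDirectSum

def slice {K : Type*} (S : Set (G × K)) (k : K) : Set G := {g | (g, k) ∈ S}

theorem slice_vadd {K : Type*} [AddGroup K] (S : Set (G × K)) (g : G) (e k : K) :
    slice ((g, e) +ᵥ S) k = g +ᵥ slice S (-e + k) := by
  ext h
  simp [slice, mem_vadd_set_iff_neg_vadd_mem]

def liftTile (Ω : Set G) (a : G) : Set (G × ZMod 2) := Ω ×ˢ {0} ∪ (a +ᵥ Ω) ×ˢ {1}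

theorem slice_liftTile_zero (Ω : Set G) (a : G) : slice (liftTile Ω a) 0 = Ω := by
  ext; simp [slice, liftTile]

theorem slice_liftTile_one (Ω : Set G) (a : G) : slice (liftTile Ω a) 1 = a +ᵥ Ω := by
  ext; simp [slice, liftTile]

theorem isTilingPair_liftTile {Ω T : Set G} (h : IsTilingPair Ω T) (a : G) :
    IsTilingPair (liftTile Ω a) (T ×ˢ {0}) := by
  rw [isTilingPair_iff_isDirectSum_univ] at h ⊢
  have h0 := h.comm.prod_singleton (0 : ZMod 2) 0
  have h1 := (h.comm.vadd a).prod_singleton (0 : ZMod 2) 1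
  rw [add_zero] at h0
  rw [vadd_set_univ, zero_add] at h1
  have hlevels : ({0} ∪ {1} : Set (ZMod 2)) = univ := by
    ext k; rcases ZMod.eq_zero_or_eq_one k with rfl | rfl <;> simp
  have := (h0.union h1 (disjoint_prod.mpr (Or.inr (by simp)))).comm
  rwa [← prod_union, hlevels, univ_prod_univ] at this

theorem isPeriodic_of_isPeriodic_liftTile {Ω : Set G} {a : G} (h2a : 2 • a ≠ 0)
    (h : IsPeriodic (liftTile Ω a)) : IsPeriodic Ω := by
  obtain ⟨hne, ⟨g, e⟩, hge, hper⟩ := isPeriodic_iff.mp h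
  have hslice (k : ZMod 2) : g +ᵥ slice (liftTile Ω a) (-e + k) = slice (liftTile Ω a) k := by
    rw [← slice_vadd, hper]
  have hΩ : Ω.Nonempty := by
    obtain ⟨x, hx | hx⟩ := hne
    exacts [⟨x.1, hx.1⟩, vadd_set_nonempty.mp ⟨x.1, hx.1⟩]
  refine isPeriodic_iff.mpr ⟨hΩ, ?_⟩
  rcases ZMod.eq_zero_or_eq_one e with rfl | rfl
  · refine ⟨g, fun hg => hge (by simp [hg]), ?_⟩
    simpa [slice_liftTile_zero] using hslice 0
  · have h0 := hslice 0
    have h1 := hslice 1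
    rw [show (-1 + 0 : ZMod 2) = 1 by decide, slice_liftTile_zero, slice_liftTile_one,
      ← add_vadd] at h0
    rw [show (-1 + 1 : ZMod 2) = 0 by decide, slice_liftTile_zero, slice_liftTile_one] at h1
    by_cases hga : g + a = 0
    · refine ⟨-a + g, fun h => h2a ?_, by rw [add_vadd, h1, neg_vadd_vadd]⟩
      rw [two_nsmul, show a + a = (g + a) - (-a + g) by abel, hga, h, sub_zero]
    · exact ⟨g + a, hga, h0⟩

theorem IsTilingPair.isDirectSum_slice {Ω : Set G} {a : G} {S : Set (G × ZMod 2)}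
    (hS : IsTilingPair (liftTile Ω a) S) (k : ZMod 2) :
    ∃ P, IsDirectSum Ω (slice S k) P ∧ IsDirectSum Ω (a +ᵥ slice S (k + 1)) Pᶜ := by
  rw [isTilingPair_iff_isDirectSum_univ] at hS
  -- a representation of `(h, k)` in `liftTile Ω a ⊕ S` is `ι₀ p` or `ι₁ p`, according to the
  -- level of its `liftTile Ω a`-summand, for a representation `p` of `h` in one of the two sums
  let ι₀ : G × G → (G × ZMod 2) × (G × ZMod 2) := fun p => ((p.1, 0), (p.2, k))
  let ι₁ : G × G → (G × ZMod 2) × (G × ZMod 2) := fun p => ((a + p.1, 1), (-a + p.2, k + 1))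
  have hι₀ : MapsTo ι₀ (Ω ×ˢ slice S k) (liftTile Ω a ×ˢ S) :=
    fun p hp => ⟨Or.inl ⟨hp.1, rfl⟩, hp.2⟩
  have hι₁ : MapsTo ι₁ (Ω ×ˢ (a +ᵥ slice S (k + 1))) (liftTile Ω a ×ˢ S) :=
    fun p hp => ⟨Or.inr ⟨vadd_mem_vadd_set hp.1, rfl⟩, mem_vadd_set_iff_neg_vadd_mem.mp hp.2⟩
  have hsum₀ (p : G × G) : (ι₀ p).1 + (ι₀ p).2 = (p.1 + p.2, k) := by simp [ι₀]
  have hsum₁ (p : G × G) : (ι₁ p).1 + (ι₁ p).2 = (p.1 + p.2, k) := by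
    simp only [ι₁, Prod.mk_add_mk, Prod.mk.injEq]
    constructor
    · abel
    · grind
  refine ⟨_, InjOn.bijOn_image fun p hp q hq hpq => ?_,
    fun p hp => ?_, fun p hp q hq hpq => ?_, fun h hh => ?_⟩
  · have := hS.injOn (hι₀ hp) (hι₀ hq) (by rw [hsum₀, hsum₀]; exact congrArg (·, k) hpq)
    simpa [ι₀, Prod.ext_iff] using this
  · rintro ⟨q, hq, hqp⟩
    have := hS.injOn (hι₀ hq) (hι₁ hp) (by rw [hsum₀, hsum₁]; exact congrArg (·, k) hqp)
    simp [ι₀, ι₁] at this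
  · have := hS.injOn (hι₁ hp) (hι₁ hq) (by rw [hsum₁, hsum₁]; exact congrArg (·, k) hpq)
    simpa [ι₁, Prod.ext_iff] using this
  · obtain ⟨⟨⟨ω, e⟩, ⟨t, e'⟩⟩, ⟨hx, hy⟩, hxy⟩ := hS.surjOn (mem_univ (h, k))
    simp only [Prod.mk_add_mk, Prod.mk.injEq] at hxy
    rcases hx with ⟨hω, he⟩ | ⟨⟨ω', hω', rfl⟩, he⟩ <;>
      simp only [mem_singleton_iff] at he <;> subst he
    · obtain rfl : e' = k := by grind
      exact absurd ⟨(ω, t), ⟨hω, hy⟩, hxy.1⟩ hh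
    · obtain rfl : e' = k + 1 := by grind
      refine ⟨(ω', a + t), ⟨hω', vadd_mem_vadd_set hy⟩, ?_⟩
      rw [← hxy.1]; simp only [vadd_eq_add]; abel

theorem IsTilingPair.exists_isPeriodic_isTilingPair {Ω : Set G} {a : G} {S : Set (G × ZMod 2)}
    (hΩS : IsTilingPair (liftTile Ω a) S)
    (ha : Odd (addOrderOf a)) (hS : IsPeriodic S) :
    ∃ T, IsPeriodic T ∧ IsTilingPair Ω T := by
  obtain ⟨-, ⟨g, e⟩, hge, hgS⟩ := isPeriodic_iff.mp hS
  have hslice (k : ZMod 2) : g +ᵥ slice S (-e + k) = slice S k := by rw [← slice_vadd, hgS]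
  obtain ⟨P, hP₀, hP₁⟩ := hΩS.isDirectSum_slice 0
  rw [zero_add] at hP₁
  rcases ZMod.eq_zero_or_eq_one e with rfl | rfl
  · have hT := hP₀.isTilingPair_union_compl hP₁
    refine ⟨_, isPeriodic_iff.mpr ⟨hT.nonempty_right, g, fun hg => hge (by simp [hg]), ?_⟩, hT⟩
    simp only [neg_zero, zero_add] at hslice
    rw [vadd_set_union, vadd_comm g a, hslice, hslice]
  · have h₀ := hslice 0
    have h₁ := hslice 1
    rw [show (-1 + 0 : ZMod 2) = 1 by decide] at h₀
    rw [show (-1 + 1 : ZMod 2) = 0 by decide] at h₁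
    rw [← h₁, vadd_vadd] at hP₁
    have hnP := hP₀.odd_nsmul_vadd hP₁ ha
    rw [nsmul_add, addOrderOf_nsmul_eq_zero, zero_add] at hnP
    have hT := hP₀.isTilingPair_union_compl hnP
    have h2g : g + g ∈ AddAction.stabilizer G (slice S 0) := by
      rw [AddAction.mem_stabilizer_iff, add_vadd, h₁, h₀]
    refine ⟨_, isPeriodic_iff.mpr ⟨hT.nonempty_right, addOrderOf a • g, fun hng => ?_, ?_⟩, hT⟩
    · rw [hng, zero_vadd] at hnP
      exact compl_ne_self (hP₀.eq hnP).symm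
    · rw [vadd_set_union, vadd_vadd, ← nsmul_add,
        AddAction.mem_stabilizer_iff.mp (nsmul_mem h2g _), union_comm]

end

theorem exists_odd_addOrderOf_two_nsmul_ne_zero {G : Type*} [AddGroup G] [Fintype G]
    (h : ¬ ∃ k : ℕ, Fintype.card G = 2 ^ k) : ∃ a : G, Odd (addOrderOf a) ∧ 2 • a ≠ 0 := by
  obtain ⟨p, hp, hdvd, hodd⟩ := (Nat.eq_two_pow_or_exists_odd_prime_and_dvd _).resolve_left h
  have := Fact.mk hp
  obtain ⟨a, rfl⟩ := exists_prime_addOrderOf_dvd_card p hdvd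
  refine ⟨a, hodd, fun h2a => ?_⟩
  have := (Nat.prime_dvd_prime_iff_eq hp Nat.prime_two).mp (addOrderOf_dvd_of_nsmul_eq_zero h2a)
  exact absurd (this ▸ hodd) (by decide)

/-- If `H` is not a 2-group and does not have the PT property, then
`H × Z_2` does not have the PT property. -/
theorem not_hasPT_prod_two (H : Type*) [AddCommGroup H] [Fintype H]
    (h2 : ¬ ∃ k : ℕ, Fintype.card H = 2 ^ k) (hH : ¬ HasPT H) :
    ¬ HasPT (H × ZMod 2) := by
  intro hPT
  simp only [HasPT, not_forall, not_or, not_exists, not_and] at hH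
  obtain ⟨Ω, T, hΩT, hΩ, hT⟩ := hH
  obtain ⟨a, ha, h2a⟩ := exists_odd_addOrderOf_two_nsmul_ne_zero h2
  rcases hPT _ _ (isTilingPair_liftTile hΩT a) with hper | ⟨S, hS, hΩS⟩
  · exact hΩ (isPeriodic_of_isPeriodic_liftTile h2a hper)
  · obtain ⟨T', hT', hΩT'⟩ := hΩS.exists_isPeriodic_isTilingPair ha hS
    exact hT T' hT' hΩT'
end

section
/- Let p be a prime, n ≥ 1, and let Ω be a non-trivial tile of the cyclic group Z_{p^n} (i.e., 1 < |Ω| < p^n). If Ω is not periodic, then every tiling complement T ∈ 𝒯_Ω is periodic with period p^{n-1}, that is, T + p^{n-1} = T for all T ∈ 𝒯_Ω. -/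
open Polynomial Finset Complex

namespace TilingAux

open scoped Classical

variable {N : ℕ} [NeZero N]

/-- indicator of `A` as a complex number. -/
noncomputable def indC (A : Set (ZMod N)) (g : ZMod N) : ℂ :=
  if g ∈ A then 1 else 0

/-- indicator of `A` as a rational, indexed by naturals. -/
noncomputable def ind (A : Set (ZMod N)) (j : ℕ) : ℚ :=
  if (j : ZMod N) ∈ A then 1 else 0

/-- mask polynomial of `A`. -/
noncomputable def mask (A : Set (ZMod N)) : ℚ[X] :=
  ∑ j ∈ Finset.range N, Polynomial.C (ind A j) * Polynomial.X ^ j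

lemma mask_coeff (A : Set (ZMod N)) (m : ℕ) :
    (mask A).coeff m = if m < N then ind A m else 0 := by
  rw [mask, finset_sum_coeff]
  simp only [coeff_C_mul, coeff_X_pow, mul_ite, mul_one, mul_zero]
  rw [Finset.sum_ite_eq (Finset.range N) m (fun j => ind A j)]
  simp [Finset.mem_range]

lemma pow_val_add {z : ℂ} (hz : z ^ N = 1) (a b : ZMod N) :
    z ^ (a + b).val = z ^ a.val * z ^ b.val := by
  rw [← pow_add, ZMod.val_add]
  conv_rhs => rw [← Nat.div_add_mod (a.val + b.val) N]
  rw [pow_add, pow_mul, hz, one_pow, one_mul]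

lemma sum_range_eq_sum_univ (f : ℕ → ℂ) :
    ∑ j ∈ Finset.range N, f j = ∑ g : ZMod N, f g.val := by
  refine Finset.sum_nbij' (fun j => (j : ZMod N)) (fun g => g.val) ?_ ?_ ?_ ?_ ?_
  · intro j hj; exact Finset.mem_univ _
  · intro g _; exact Finset.mem_range.mpr (ZMod.val_lt g)
  · intro j hj; exact ZMod.val_natCast_of_lt (Finset.mem_range.mp hj)
  · intro g _; exact ZMod.natCast_rightInverse g
  · intro j hj; rw [ZMod.val_natCast_of_lt (Finset.mem_range.mp hj)]

lemma mask_aeval (A : Set (ZMod N)) (z : ℂ) :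
    (Polynomial.aeval z) (mask A) =
      ∑ g : ZMod N, indC A g * z ^ g.val := by
  have h1 : (Polynomial.aeval z) (mask A)
      = ∑ j ∈ Finset.range N, indC A ((j : ZMod N)) * z ^ j := by
    rw [mask, map_sum]
    refine Finset.sum_congr rfl fun j hj => ?_
    rw [map_mul, aeval_C, map_pow, aeval_X, ind, indC]
    congr 1
    split <;> simp [*]
  rw [h1, sum_range_eq_sum_univ]
  refine Finset.sum_congr rfl fun g _ => ?_
  rw [ZMod.natCast_rightInverse g]

lemma tiling_sum {Ω T : Set (ZMod N)} (h : IsTilingPair Ω T) {z : ℂ} (hz : z ^ N = 1) :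
    (∑ g : ZMod N, indC Ω g * z ^ g.val) *
      (∑ g : ZMod N, indC T g * z ^ g.val) =
    ∑ g : ZMod N, z ^ g.val := by
  rw [Finset.sum_mul_sum]
  have : ∀ a b : ZMod N,
      (indC Ω a * z ^ a.val) * (indC T b * z ^ b.val)
      = (if a ∈ Ω ∧ b ∈ T then (1:ℂ) else 0) * z ^ (a + b).val := by
    intro a b
    rw [pow_val_add hz]
    by_cases ha : a ∈ Ω <;> by_cases hb : b ∈ T <;> simp [indC, ha, hb]
  simp only [this]
  rw [← Finset.sum_product']
  rw [← Finset.sum_fiberwise_of_maps_to (g := fun q : ZMod N × ZMod N => q.1 + q.2)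
    (fun q (_ : q ∈ Finset.univ ×ˢ Finset.univ) => Finset.mem_univ (q.1 + q.2))
    (fun q => (if q.1 ∈ Ω ∧ q.2 ∈ T then (1:ℂ) else 0) * z ^ (q.1 + q.2).val)]
  refine Finset.sum_congr rfl fun x _ => ?_
  obtain ⟨q₀, ⟨hq1, hq2, hq3⟩, huniq⟩ := h x
  rw [Finset.sum_eq_single q₀]
  · simp [indC, hq1, hq2, hq3]
  · intro q hq hne
    simp only [Finset.mem_filter] at hq
    rcases Classical.em (q.1 ∈ Ω ∧ q.2 ∈ T) with hmem | hmem
    · exact absurd (huniq q ⟨hmem.1, hmem.2, hq.2⟩) hne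
    · simp [indC, hmem]
  · intro hq₀
    exfalso
    exact hq₀ (Finset.mem_filter.mpr ⟨Finset.mem_univ _, hq3⟩)


lemma coeff_sum_range (f : ℕ → ℚ) (m : ℕ) :
    (∑ j ∈ Finset.range N, Polynomial.C (f j) * Polynomial.X ^ j).coeff m
      = if m < N then f m else 0 := by
  rw [finset_sum_coeff]
  simp only [coeff_C_mul, coeff_X_pow, mul_ite, mul_one, mul_zero]
  rw [Finset.sum_ite_eq (Finset.range N) m f]
  simp [Finset.mem_range]

lemma key {p n : ℕ} [NeZero (p ^ n)] (hp : p.Prime) (hn : 1 ≤ n) (A : Set (ZMod (p ^ n)))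
    {ζ : ℂ} (hζ : IsPrimitiveRoot ζ (p ^ n))
    (h0 : ∑ g : ZMod (p ^ n), indC A g * ζ ^ g.val = 0) :
    ∀ a : ZMod (p ^ n), a ∈ A ↔ a + ((p ^ (n - 1) : ℕ) : ZMod (p ^ n)) ∈ A := by
  set q := p ^ (n - 1) with hqdef
  have hq0 : 0 < q := pow_pos hp.pos _
  have hNq : p ^ n = q * p := by rw [hqdef, ← pow_succ]; congr 1; omega
  have hqN : q < p ^ n := by
    rw [hNq]; exact lt_mul_of_one_lt_right hq0 hp.one_lt
  have hNpos : 0 < p ^ n := pow_pos hp.pos _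
  -- divisibility by the cyclotomic polynomial
  have hz : (Polynomial.aeval ζ) (mask A) = 0 := by rw [mask_aeval]; exact h0
  have hdvd : cyclotomic (p ^ n) ℚ ∣ mask A := by
    rw [cyclotomic_eq_minpoly_rat hζ hNpos]
    exact minpoly.dvd ℚ ζ hz
  have hΦ : cyclotomic (p ^ n) ℚ = ∑ i ∈ Finset.range p, (X ^ q : ℚ[X]) ^ i := by
    have h := cyclotomic_prime_pow_eq_geom_sum (R := ℚ) (n := n - 1) hp
    rw [show n - 1 + 1 = n from by omega] at h
    exact h
  set Q : ℚ[X] := ∑ k ∈ Finset.range q, Polynomial.C (ind A (k + (p - 1) * q)) * X ^ k with hQdef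
  have hΦQ : cyclotomic (p ^ n) ℚ * Q
      = ∑ j ∈ Finset.range (p ^ n), Polynomial.C (ind A (j % q + (p - 1) * q)) * X ^ j := by
    rw [hΦ, hQdef, Finset.sum_mul_sum]
    have hterm : ∀ i k : ℕ, ((X ^ q : ℚ[X]) ^ i) * (Polynomial.C (ind A (k + (p - 1) * q)) * X ^ k)
        = Polynomial.C (ind A (k + (p - 1) * q)) * X ^ (q * i + k) := by
      intro i k
      rw [← pow_mul, pow_add]
      ring
    simp only [hterm]
    rw [← Finset.sum_product']
    refine Finset.sum_nbij' (fun x : ℕ × ℕ => q * x.1 + x.2) (fun m => (m / q, m % q))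
      ?_ ?_ ?_ ?_ ?_
    · rintro ⟨i, k⟩ hx
      simp only [Finset.mem_product, Finset.mem_range] at hx
      refine Finset.mem_range.mpr ?_
      calc q * i + k < q * i + q := by omega
        _ = q * (i + 1) := by ring
        _ ≤ q * p := Nat.mul_le_mul_left q hx.1
        _ = p ^ n := hNq.symm
    · intro m hm
      simp only [Finset.mem_product, Finset.mem_range]
      constructor
      · rw [Nat.div_lt_iff_lt_mul hq0, mul_comm p q, ← hNq]
        exact Finset.mem_range.mp hm
      · exact Nat.mod_lt _ hq0
    · rintro ⟨i, k⟩ hx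
      simp only [Finset.mem_product, Finset.mem_range] at hx
      have h1 : (q * i + k) / q = i := by
        rw [Nat.mul_add_div hq0, Nat.div_eq_of_lt hx.2, add_zero]
      have h2 : (q * i + k) % q = k := by
        rw [Nat.mul_add_mod, Nat.mod_eq_of_lt hx.2]
      simp [h1, h2]
    · intro m _
      exact Nat.div_add_mod m q
    · rintro ⟨i, k⟩ hx
      simp only [Finset.mem_product, Finset.mem_range] at hx
      have h2 : (q * i + k) % q = k := by
        rw [Nat.mul_add_mod, Nat.mod_eq_of_lt hx.2]
      rw [h2]
  -- the remainder is zero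
  set R : ℚ[X] := mask A - cyclotomic (p ^ n) ℚ * Q with hRdef
  have hRdvd : cyclotomic (p ^ n) ℚ ∣ R := dvd_sub hdvd (dvd_mul_right _ _)
  have hRcoeff : ∀ m : ℕ, R.coeff m
      = (if m < p ^ n then ind A m else 0)
        - (if m < p ^ n then ind A (m % q + (p - 1) * q) else 0) := by
    intro m
    rw [hRdef, Polynomial.coeff_sub, mask_coeff, hΦQ, coeff_sum_range]
  have htot : (p ^ n).totient = q * (p - 1) := by
    rw [Nat.totient_prime_pow hp (by omega : 0 < n)]
  have hdegΦ : (cyclotomic (p ^ n) ℚ).degree = ((q * (p - 1) : ℕ) : WithBot ℕ) := by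
    rw [Polynomial.degree_cyclotomic, htot]
  have hdeg : R.degree < (cyclotomic (p ^ n) ℚ).degree := by
    rw [hdegΦ]
    rw [Polynomial.degree_lt_iff_coeff_zero]
    intro m hm
    rw [hRcoeff]
    by_cases hmN : m < p ^ n
    · have hdiv : m / q = p - 1 := by
        apply Nat.div_eq_of_lt_le
        · calc (p - 1) * q = q * (p - 1) := Nat.mul_comm _ _
            _ ≤ m := by exact_mod_cast hm
        · have h2 : (p - 1 + 1) * q = p ^ n := by
            rw [hNq, show p - 1 + 1 = p from Nat.succ_pred_eq_of_pos hp.pos, Nat.mul_comm]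
          rw [h2]; exact hmN
      have : m % q + (p - 1) * q = m := by
        conv_rhs => rw [← Nat.div_add_mod m q]
        rw [hdiv]; ring
      rw [this]
      simp [hmN]
    · simp [hmN]
  have hR0 : R = 0 := Polynomial.eq_zero_of_dvd_of_degree_lt hRdvd hdeg
  have hconst : ∀ m m' : ℕ, m < p ^ n → m' < p ^ n → m % q = m' % q →
      ind A m = ind A m' := by
    intro m m' hm hm' hmod
    have e1 : ind A m = ind A (m % q + (p - 1) * q) := by
      have := hRcoeff m
      rw [hR0] at this
      simp only [Polynomial.coeff_zero] at this
      simpa [hm] using sub_eq_zero.mp this.symm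
    have e2 : ind A m' = ind A (m' % q + (p - 1) * q) := by
      have := hRcoeff m'
      rw [hR0] at this
      simp only [Polynomial.coeff_zero] at this
      simpa [hm'] using sub_eq_zero.mp this.symm
    rw [e1, e2, hmod]
  -- translate to membership
  intro a
  have hvq : ((q : ZMod (p ^ n))).val = q := ZMod.val_natCast_of_lt hqN
  have hmod : (a + (q : ZMod (p ^ n))).val % q = a.val % q := by
    rw [ZMod.val_add, hvq, Nat.mod_mod_of_dvd _ ⟨p, hNq⟩, Nat.add_mod_right]
  have hind : ind A a.val = ind A (a + (q : ZMod (p ^ n))).val :=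
    hconst a.val (a + (q : ZMod (p ^ n))).val (ZMod.val_lt a) (ZMod.val_lt _) hmod.symm
  simp only [ind, ZMod.natCast_val, ZMod.cast_id] at hind
  constructor
  · intro ha
    by_contra hb
    rw [if_pos ha, if_neg hb] at hind
    exact one_ne_zero hind
  · intro hb
    by_contra ha
    rw [if_neg ha, if_pos hb] at hind
    exact zero_ne_one hind

lemma image_eq_of_mem_iff {A : Set (ZMod N)} {g : ZMod N}
    (h : ∀ a, a ∈ A ↔ a + g ∈ A) : (fun a => a + g) '' A = A := by
  ext x
  constructor
  · rintro ⟨a, ha, rfl⟩; exact (h a).mp ha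
  · intro hx
    exact ⟨x - g, (h (x - g)).mpr (by rwa [sub_add_cancel]), sub_add_cancel x g⟩

end TilingAux

/-- If `Ω` is a non-trivial non-periodic tile of `Z_{p^n}`, then every tiling
complement of `Ω` is periodic with period `p^{n-1}`. -/
theorem tiling_complement_periodic_of_nonperiodic (p : ℕ) (hp : p.Prime)
    (n : ℕ) (hn : 1 ≤ n) (Ω : Set (ZMod (p ^ n)))
    (hcard : 1 < Ω.ncard ∧ Ω.ncard < p ^ n)
    (htile : IsTile Ω) (hper : ¬ IsPeriodic Ω) :
    ∀ T : Set (ZMod (p ^ n)), IsTilingPair Ω T →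
      (fun t => t + ((p : ZMod (p ^ n)) ^ (n - 1))) '' T = T := by
  intro T hT
  haveI : NeZero (p ^ n) := ⟨pow_ne_zero n hp.pos.ne'⟩
  have hN1 : 1 < p ^ n := Nat.one_lt_pow (by omega) hp.one_lt
  have hζ := Complex.isPrimitiveRoot_exp (p ^ n) (by omega)
  have hζN : Complex.exp (2 * Real.pi * Complex.I / (p ^ n : ℕ)) ^ (p ^ n) = 1 :=
    hζ.pow_eq_one
  have hgeom : ∑ g : ZMod (p ^ n),
      Complex.exp (2 * Real.pi * Complex.I / (p ^ n : ℕ)) ^ g.val = 0 := by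
    rw [← TilingAux.sum_range_eq_sum_univ]
    exact hζ.geom_sum_eq_zero hN1
  have hzero := TilingAux.tiling_sum hT hζN
  rw [hgeom] at hzero
  have hcast : ((p : ZMod (p ^ n))) ^ (n - 1) = ((p ^ (n - 1) : ℕ) : ZMod (p ^ n)) := by
    push_cast
    rfl
  rcases mul_eq_zero.mp hzero with h | h
  · exfalso
    apply hper
    refine ⟨Set.nonempty_of_ncard_ne_zero (by omega), ((p ^ (n - 1) : ℕ) : ZMod (p ^ n)), ?_, ?_⟩
    · rw [Ne, ZMod.natCast_eq_zero_iff]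
      intro hd
      have h1 := Nat.le_of_dvd (pow_pos hp.pos _) hd
      have h2 : p ^ (n - 1) < p ^ n := Nat.pow_lt_pow_right hp.one_lt (by omega)
      omega
    · exact TilingAux.image_eq_of_mem_iff (TilingAux.key hp hn Ω hζ h)
  · rw [hcast]
    exact TilingAux.image_eq_of_mem_iff (TilingAux.key hp hn T hζ h)
end

section
/- For every prime p and every positive integer n, the group Z_{p^n} × Z_p has the uniformly periodic tiling (UPT) property; that is, every tile of Z_{p^n} × Z_p is either uniformly periodic or dual uniformly periodic. -/
/-!
Write `G = ZMod (p ^ (n + 1)) × ZMod p`. Over `ℂ`, `(Ω, T)` is a tiling pair iff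
`|Ω| |T| = |G|` and `Ω̂ ψ * T̂ ψ = 0` for every nontrivial character `ψ`, and a finite set has
period `u` iff its transform vanishes wherever `ψ u ≠ 1`.

Take `u = (p ^ n, 0)`. A character with `ψ u ≠ 1` has `ξ = ψ (1, 0)` a primitive
`p ^ (n + 1)`-th root of unity and `ψ (0, 1) = ξ ^ (p ^ n * c)` for a slope `c : ZMod p`, and then
`Ω̂ ψ` is the value at `ξ` of an integer polynomial `slopePoly c Ω`; so `Ω̂ ψ = 0` iff
`Φ_{p^(n+1)}` divides `slopePoly c Ω`, whatever `ξ`. If this divisibility fails for every slope,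
every tiling complement has period `u`; if it holds for every slope, `Ω` itself has period `u`.

Otherwise it holds for some `c₀` and fails for some `c₁`. Each `Φ_{p^m}` dividing
`slopePoly c₀ Ω` contributes a factor `p` to `slopePoly c₀ Ω (1) = |Ω| = p ^ a`, and `m = n + 1`
is one of them, so the others fit into a set `S` of `a - 1` base-`p` digit positions. The numbers
with digits only in `S`, thickened along the line spanned by `(-p ^ n * c₁, 1)`, form a periodic
set `Ω'` with `|Ω'| = |Ω|` whose transform vanishes wherever `Ω̂` does off the trivial character,
so `Ω'` tiles with every tiling complement of `Ω`.
-/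

open Finset Polynomial

section Fourier

variable {G : Type*} [AddCommGroup G] [Fintype G]

lemma card_mul_eq_sum_addChar_mul_sum (f : G → ℂ) (a : G) :
    (Fintype.card G : ℂ) * f a = ∑ ψ : AddChar G ℂ, ψ (-a) * ∑ x, f x * ψ x := by
  classical
  calc (Fintype.card G : ℂ) * f a
      = ∑ x, f x * ∑ ψ : AddChar G ℂ, ψ (x + -a) := by
        simp_rw [AddChar.sum_apply_eq_ite, add_neg_eq_zero, mul_ite, mul_zero,
          Finset.sum_ite_eq', Finset.mem_univ, if_true, mul_comm]
    _ = ∑ ψ : AddChar G ℂ, ψ (-a) * ∑ x, f x * ψ x := by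
        simp_rw [Finset.mul_sum, AddChar.map_add_eq_mul]
        rw [Finset.sum_comm]
        exact Finset.sum_congr rfl fun _ _ => Finset.sum_congr rfl fun _ _ => by ring

lemma eq_of_forall_sum_mul_addChar_eq {f g : G → ℂ}
    (h : ∀ ψ : AddChar G ℂ, ∑ x, f x * ψ x = ∑ x, g x * ψ x) : f = g := by
  funext a
  have hG : (Fintype.card G : ℂ) ≠ 0 := Nat.cast_ne_zero.2 Fintype.card_ne_zero
  apply mul_left_cancel₀ hG
  simp only [card_mul_eq_sum_addChar_mul_sum, h]

lemma Finset.eq_of_forall_sum_addChar_eq {A B : Finset G}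
    (h : ∀ ψ : AddChar G ℂ, ∑ a ∈ A, ψ a = ∑ b ∈ B, ψ b) : A = B := by
  classical
  have hind : (fun x => if x ∈ A then (1 : ℂ) else 0) = fun x => if x ∈ B then 1 else 0 := by
    refine eq_of_forall_sum_mul_addChar_eq fun ψ => ?_
    simpa only [ite_mul, one_mul, zero_mul, Finset.sum_ite_mem, Finset.univ_inter] using h ψ
  ext x
  have hx := congrFun hind x
  by_cases hA : x ∈ A <;> by_cases hB : x ∈ B <;> simp_all

lemma Finset.image_add_right_eq_self_of_sum_addChar [DecidableEq G] {A : Finset G} {u : G}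
    (h : ∀ ψ : AddChar G ℂ, ψ u ≠ 1 → ∑ a ∈ A, ψ a = 0) : A.image (· + u) = A := by
  refine Finset.eq_of_forall_sum_addChar_eq fun ψ => ?_
  rw [Finset.sum_image (fun x _ y _ => add_right_cancel)]
  simp_rw [AddChar.map_add_eq_mul, ← Finset.sum_mul]
  by_cases hu : ψ u = 1
  · rw [hu, mul_one]
  · rw [h ψ hu, zero_mul]

end Fourier

section Tiling

variable {G : Type*} [AddCommGroup G] [DecidableEq G]

lemma isTilingPair_iff_forall_card_eq_one {A B : Finset G} :
    IsTilingPair (A : Set G) B ↔ ∀ g, #{z ∈ A ×ˢ B | z.1 + z.2 = g} = 1 := by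
  refine forall_congr' fun g => ?_
  rw [Finset.card_eq_one_iff_existsUnique]
  simp [and_assoc]

variable [Fintype G]

lemma sum_card_mul_addChar (A B : Finset G) (ψ : AddChar G ℂ) :
    ∑ g, (#{z ∈ A ×ˢ B | z.1 + z.2 = g} : ℂ) * ψ g =
      (∑ a ∈ A, ψ a) * ∑ b ∈ B, ψ b := by
  rw [Finset.sum_mul_sum, ← Finset.sum_product',
    ← Finset.sum_fiberwise (A ×ˢ B) (fun z => z.1 + z.2)]
  refine Finset.sum_congr rfl fun g _ => ?_
  rw [Finset.sum_congr rfl fun z hz => by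
      rw [← AddChar.map_add_eq_mul, (Finset.mem_filter.1 hz).2],
    Finset.sum_const, nsmul_eq_mul]

lemma isTilingPair_iff_sum_addChar {A B : Finset G} :
    IsTilingPair (A : Set G) B ↔
      ∀ ψ : AddChar G ℂ, (∑ a ∈ A, ψ a) * ∑ b ∈ B, ψ b = ∑ g, ψ g := by
  rw [isTilingPair_iff_forall_card_eq_one]
  constructor
  · intro h ψ
    simp [← sum_card_mul_addChar, h]
  · intro h
    have hr := eq_of_forall_sum_mul_addChar_eq
      (f := fun g => (#{z ∈ A ×ˢ B | z.1 + z.2 = g} : ℂ)) (g := fun _ => 1)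
      fun ψ => by simp [sum_card_mul_addChar, h]
    exact fun g => by exact_mod_cast congrFun hr g

lemma IsTilingPair.card_mul_card {A B : Finset G} (h : IsTilingPair (A : Set G) B) :
    #A * #B = Fintype.card G := by
  have := isTilingPair_iff_sum_addChar.1 h 0
  simp only [AddChar.zero_apply, Finset.sum_const, nsmul_eq_mul, mul_one] at this
  exact_mod_cast this

lemma IsTilingPair.sum_addChar_mul_sum_eq_zero {A B : Finset G} (h : IsTilingPair (A : Set G) B)
    {ψ : AddChar G ℂ} (hψ : ψ ≠ 0) : (∑ a ∈ A, ψ a) * ∑ b ∈ B, ψ b = 0 := by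
  rw [isTilingPair_iff_sum_addChar.1 h ψ, AddChar.sum_eq_zero_iff_ne_zero.2 hψ]

lemma IsTilingPair.image_add_right_eq_self {A B : Finset G} (h : IsTilingPair (A : Set G) B)
    {u : G} (hA : ∀ ψ : AddChar G ℂ, ψ u ≠ 1 → ∑ a ∈ A, ψ a ≠ 0) :
    B.image (· + u) = B := by
  refine Finset.image_add_right_eq_self_of_sum_addChar fun ψ hψu => ?_
  have hψ : ψ ≠ 0 := by rintro rfl; exact hψu rfl
  exact (mul_eq_zero.1 (h.sum_addChar_mul_sum_eq_zero hψ)).resolve_left (hA ψ hψu)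

lemma IsTilingPair.of_sum_addChar_eq_zero {A A' B : Finset G} (h : IsTilingPair (A : Set G) B)
    (hcard : #A' = #A)
    (hA' : ∀ ψ : AddChar G ℂ, ψ ≠ 0 → ∑ a ∈ A, ψ a = 0 → ∑ a ∈ A', ψ a = 0) :
    IsTilingPair (A' : Set G) B := by
  refine isTilingPair_iff_sum_addChar.2 fun ψ => ?_
  by_cases hψ : ψ = 0
  · subst hψ
    simp only [AddChar.zero_apply, Finset.sum_const, nsmul_eq_mul, mul_one]
    exact_mod_cast hcard ▸ h.card_mul_card
  · rw [AddChar.sum_eq_zero_iff_ne_zero.2 hψ]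
    rcases mul_eq_zero.1 (h.sum_addChar_mul_sum_eq_zero hψ) with hA | hB
    · rw [hA' ψ hψ hA, zero_mul]
    · rw [hB, mul_zero]

end Tiling

section UPT

variable {G : Type*} [AddCommGroup G]

lemma IsTilingPair.left_nonempty {Ω T : Set G} (h : IsTilingPair Ω T) : Ω.Nonempty :=
  let ⟨z, hz⟩ := (h 0).exists
  ⟨z.1, hz.1⟩

lemma dualUniformlyPeriodic_of_forall_isTilingPair {Ω Ω' : Set G} (hΩ : IsTile Ω) {g : G}
    (hg : g ≠ 0) (hper : (fun a => a + g) '' Ω' = Ω')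
    (h : ∀ T, IsTilingPair Ω T → IsTilingPair Ω' T) : DualUniformlyPeriodic Ω :=
  let ⟨T, hT⟩ := hΩ
  ⟨Ω', ⟨(h T hT).left_nonempty, g, hg, hper⟩, ⟨T, h T hT⟩, h⟩

end UPT

lemma IsPrimitiveRoot.cyclotomic_dvd_iff_aeval_eq_zero {K : Type*} [Field K] [CharZero K] {ξ : K}
    {k : ℕ} (hξ : IsPrimitiveRoot ξ k) (hk : 0 < k) (P : ℤ[X]) :
    cyclotomic k ℤ ∣ P ↔ aeval ξ P = 0 := by
  rw [cyclotomic_eq_minpoly hξ hk, minpoly.isIntegrallyClosed_dvd_iff (hξ.isIntegral hk)]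

lemma pow_card_dvd_eval_one_of_cyclotomic_dvd {p : ℕ} [Fact p.Prime] {P : ℤ[X]} {S : Finset ℕ}
    (h : ∀ i ∈ S, cyclotomic (p ^ (i + 1)) ℤ ∣ P) : (p : ℤ) ^ #S ∣ P.eval 1 := by
  have hprod : ∏ i ∈ S, cyclotomic (p ^ (i + 1)) ℤ ∣ P := by
    rw [← map_dvd_map (Int.castRingHom ℚ) Int.cast_injective
      (monic_prod_of_monic _ _ fun i _ => cyclotomic.monic _ ℤ), Polynomial.map_prod]
    refine Finset.prod_dvd_of_coprime (fun i _ j _ hij => ?_) fun i hi => ?_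
    · simp only [Function.onFun, map_cyclotomic]
      exact cyclotomic.isCoprime_rat fun h' =>
        hij (by simpa using Nat.pow_right_injective (Fact.out : p.Prime).two_le h')
    · exact Polynomial.map_dvd _ (h i hi)
  simpa [eval_prod, eval_one_cyclotomic_prime_pow] using eval_dvd (x := 1) hprod

lemma AddChar.apply_prod_zmod {N M : ℕ} [NeZero N] [NeZero M] {R : Type*} [CommMonoid R]
    (ψ : AddChar (ZMod N × ZMod M) R) (g : ZMod N × ZMod M) :
    ψ g = ψ (1, 0) ^ g.1.val * ψ (0, 1) ^ g.2.val := by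
  conv_lhs =>
    rw [show g = g.1.val • ((1, 0) : ZMod N × ZMod M) + g.2.val • (0, 1) by ext <;> simp]
  rw [AddChar.map_add_eq_mul, AddChar.map_nsmul_eq_pow, AddChar.map_nsmul_eq_pow]

lemma AddChar.apply_one_zero_pow_eq_one {N M : ℕ} {R : Type*} [CommMonoid R]
    (ψ : AddChar (ZMod N × ZMod M) R) : ψ (1, 0) ^ N = 1 := by
  rw [← AddChar.map_nsmul_eq_pow]
  simp [Prod.mk_zero_zero]

lemma AddChar.apply_zero_one_pow_eq_one {N M : ℕ} {R : Type*} [CommMonoid R]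
    (ψ : AddChar (ZMod N × ZMod M) R) : ψ (0, 1) ^ M = 1 := by
  rw [← AddChar.map_nsmul_eq_pow]
  simp [Prod.mk_zero_zero]

lemma IsPrimitiveRoot.exists_of_pow_prime_pow_eq_one {M : Type*} [CommMonoid M] {p : ℕ}
    [Fact p.Prime] {ξ : M} {n : ℕ} (h : ξ ^ p ^ n = 1) (hξ : ξ ≠ 1) :
    ∃ i < n, IsPrimitiveRoot ξ (p ^ (i + 1)) := by
  obtain ⟨m, hm, hord⟩ := (Nat.dvd_prime_pow Fact.out).1 (orderOf_dvd_of_pow_eq_one h)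
  obtain ⟨i, rfl⟩ : ∃ i, m = i + 1 :=
    Nat.exists_eq_succ_of_ne_zero fun h0 => hξ (by simpa [h0] using hord)
  exact ⟨i, hm, hord ▸ IsPrimitiveRoot.orderOf ξ⟩

lemma IsPrimitiveRoot.of_pow_prime_pow_ne_one {M : Type*} [CommMonoid M] {p : ℕ} [Fact p.Prime]
    {ξ : M} {n : ℕ} (h : ξ ^ p ^ (n + 1) = 1) (hξ : ξ ^ p ^ n ≠ 1) :
    IsPrimitiveRoot ξ (p ^ (n + 1)) :=
  orderOf_eq_prime_pow hξ h ▸ IsPrimitiveRoot.orderOf ξ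

section DigitSet

/-- The numbers below `p ^ k` whose base-`p` digits vanish outside the positions in `S`. -/
def digitSet (p : ℕ) [NeZero p] {k : ℕ} (S : Finset (Fin k)) : Finset ℕ :=
  (Fintype.piFinset fun i : Fin k => if i ∈ S then (univ : Finset (Fin p)) else {0}).map
    (finFunctionFinEquiv.toEmbedding.trans Fin.valEmbedding)

variable {p k : ℕ} [NeZero p]

lemma card_digitSet (S : Finset (Fin k)) : #(digitSet p S) = p ^ #S := by
  simp [digitSet, Fintype.card_piFinset, apply_ite, Finset.prod_ite_mem]

lemma lt_of_mem_digitSet {S : Finset (Fin k)} {b : ℕ} (hb : b ∈ digitSet p S) : b < p ^ k := by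
  obtain ⟨d, -, rfl⟩ := Finset.mem_map.1 hb
  exact (finFunctionFinEquiv d).isLt

lemma sum_pow_digitSet_eq_zero {R : Type*} [CommRing R] [IsDomain R] (hp : 1 < p) {ξ : R}
    {S : Finset (Fin k)} {i : Fin k} (hi : i ∈ S) (hξ : IsPrimitiveRoot (ξ ^ p ^ (i : ℕ)) p) :
    ∑ b ∈ digitSet p S, ξ ^ b = 0 := by
  classical
  simp only [digitSet, Finset.sum_map, Function.Embedding.trans_apply, Equiv.coe_toEmbedding,
    Fin.valEmbedding_apply, finFunctionFinEquiv_apply, ← Finset.prod_pow_eq_pow_sum]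
  simp_rw [mul_comm _ (p ^ _), pow_mul]
  rw [← Finset.prod_univ_sum (fun i => if i ∈ S then univ else {0})
    (fun i (j : Fin p) => (ξ ^ p ^ (i : ℕ)) ^ (j : ℕ))]
  refine Finset.prod_eq_zero (Finset.mem_univ i) ?_
  rw [if_pos hi, Fin.sum_univ_eq_sum_range (fun j => (ξ ^ p ^ (i : ℕ)) ^ j)]
  exact hξ.geom_sum_eq_zero hp

end DigitSet

section ZModPowProd

/-- `Z_{p^(n+1)} × Z_p`, shifted by one against the theorem's `ZMod (p ^ n)` so that the subgroup
of order `p` of the cyclic factor is generated by `p ^ n`, with no truncated subtraction. -/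
abbrev ZModPowProd (p n : ℕ) : Type := ZMod (p ^ (n + 1)) × ZMod p

variable {p n : ℕ}

/-- The mask polynomial of the image of `A` under `(x, y) ↦ x + p ^ n * c * y`, with exponents
not reduced modulo `p ^ (n + 1)`. -/
noncomputable def slopePoly (c : ZMod p) (A : Finset (ZModPowProd p n)) : ℤ[X] :=
  ∑ g ∈ A, X ^ (g.1.val + p ^ n * c.val * g.2.val)

lemma slopePoly_eval_one (c : ZMod p) (A : Finset (ZModPowProd p n)) :
    (slopePoly c A).eval 1 = #A := by
  simp [slopePoly, eval_finsetSum]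

variable [Fact p.Prime]

lemma sum_addChar_eq_aeval_slopePoly (A : Finset (ZModPowProd p n))
    {ψ : AddChar (ZModPowProd p n) ℂ} {c : ZMod p}
    (hc : ψ (0, 1) = ψ (1, 0) ^ (p ^ n * c.val)) :
    ∑ g ∈ A, ψ g = aeval (ψ (1, 0)) (slopePoly c A) := by
  simp only [slopePoly, map_sum, aeval_X_pow]
  refine Finset.sum_congr rfl fun g _ => ?_
  rw [ψ.apply_prod_zmod, hc, ← pow_mul, ← pow_add]

lemma AddChar.exists_slope (ψ : AddChar (ZModPowProd p n) ℂ)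
    (hψ : ψ (1, 0) ^ p ^ n ≠ 1) :
    IsPrimitiveRoot (ψ (1, 0)) (p ^ (n + 1)) ∧
      ∃ c : ZMod p, ψ (0, 1) = ψ (1, 0) ^ (p ^ n * c.val) := by
  have hprim := IsPrimitiveRoot.of_pow_prime_pow_ne_one ψ.apply_one_zero_pow_eq_one hψ
  refine ⟨hprim, ?_⟩
  have hω : IsPrimitiveRoot (ψ (1, 0) ^ p ^ n) p :=
    hprim.pow (pow_pos (NeZero.pos p) _) (pow_succ p n)
  obtain ⟨i, hi, hωi⟩ := hω.eq_pow_of_pow_eq_one ψ.apply_zero_one_pow_eq_one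
  exact ⟨i, by rw [ZMod.val_cast_of_lt hi, pow_mul, hωi]⟩

lemma AddChar.exists_slope_sum_eq_zero_iff (ψ : AddChar (ZModPowProd p n) ℂ)
    (hψ : ψ (1, 0) ^ p ^ n ≠ 1) (A : Finset (ZModPowProd p n)) :
    ∃ c : ZMod p, (∑ g ∈ A, ψ g = 0 ↔ cyclotomic (p ^ (n + 1)) ℤ ∣ slopePoly c A) := by
  obtain ⟨hprim, c, hc⟩ := ψ.exists_slope hψ
  exact ⟨c, by rw [sum_addChar_eq_aeval_slopePoly A hc,
    hprim.cyclotomic_dvd_iff_aeval_eq_zero (pow_pos (NeZero.pos p) _)]⟩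

/-- Spans the kernel of `(x, y) ↦ x + p ^ n * c * y`: the characters trivial on it are those
with `ψ (0, 1) = ψ (1, 0) ^ (p ^ n * c)`. -/
def slopeShift (c : ZMod p) : ZModPowProd p n :=
  (-((p ^ n * c.val : ℕ) : ZMod (p ^ (n + 1))), 1)

lemma slopeShift_ne_zero (c : ZMod p) : (slopeShift c : ZModPowProd p n) ≠ 0 :=
  fun h => one_ne_zero (congrArg Prod.snd h)

lemma p_nsmul_slopeShift (c : ZMod p) : p • (slopeShift c : ZModPowProd p n) = 0 := by
  ext
  · rw [Prod.smul_fst, Prod.fst_zero, slopeShift, smul_neg, neg_eq_zero, nsmul_eq_mul,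
      ← Nat.cast_mul, ← mul_assoc, ← pow_succ', ZMod.natCast_eq_zero_iff]
    exact dvd_mul_right _ _
  · simp [slopeShift]

lemma AddChar.apply_slopeShift_eq_one_iff (ψ : AddChar (ZModPowProd p n) ℂ)
    (c : ZMod p) : ψ (slopeShift c) = 1 ↔ ψ (0, 1) = ψ (1, 0) ^ (p ^ n * c.val) := by
  have h : slopeShift c + (p ^ n * c.val) • ((1, 0) : ZModPowProd p n) = (0, 1) := by
    ext <;> simp [slopeShift]
  rw [← h, AddChar.map_add_eq_mul, AddChar.map_nsmul_eq_pow,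
    mul_eq_right₀ (pow_ne_zero _ (ψ.val_isUnit _).ne_zero)]

lemma AddChar.apply_slopeShift_pow (ψ : AddChar (ZModPowProd p n) ℂ) (c : ZMod p) :
    ψ (slopeShift c) ^ p = 1 := by
  rw [← AddChar.map_nsmul_eq_pow, p_nsmul_slopeShift, AddChar.map_zero_eq_one]

def dualTile (S : Finset (Fin (n + 1))) (c : ZMod p) : Finset (ZModPowProd p n) :=
  (digitSet p S ×ˢ range p).image fun z => z.1 • (1, 0) + z.2 • slopeShift c

lemma injOn_dualTile (S : Finset (Fin (n + 1))) (c : ZMod p) :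
    Set.InjOn (fun z : ℕ × ℕ => z.1 • ((1, 0) : ZModPowProd p n) + z.2 • slopeShift c)
      ↑(digitSet p S ×ˢ range p) := by
  rintro ⟨b, j⟩ hbj ⟨b', j'⟩ hbj' h
  simp only [Finset.coe_product, Set.mem_prod, Finset.mem_coe, Finset.mem_range] at hbj hbj'
  have hj : j = j' := by
    have := congrArg Prod.snd h
    simp only [slopeShift, Prod.smul_mk, Prod.mk_add_mk, smul_zero, zero_add, nsmul_eq_mul,
      mul_one, ZMod.natCast_eq_natCast_iff' _ _ p] at this
    rwa [Nat.mod_eq_of_lt hbj.2, Nat.mod_eq_of_lt hbj'.2] at this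
  subst hj
  have hb := congrArg Prod.fst (add_right_cancel h)
  simp only [Prod.smul_mk, nsmul_eq_mul, mul_one,
    ZMod.natCast_eq_natCast_iff' _ _ (p ^ (n + 1))] at hb
  rw [Nat.mod_eq_of_lt (lt_of_mem_digitSet hbj.1),
    Nat.mod_eq_of_lt (lt_of_mem_digitSet hbj'.1)] at hb
  rw [hb]

lemma card_dualTile (S : Finset (Fin (n + 1))) (c : ZMod p) :
    #(dualTile S c) = p ^ #S * p := by
  rw [dualTile, Finset.card_image_of_injOn (injOn_dualTile S c), card_product, card_digitSet,
    card_range]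

lemma sum_addChar_dualTile (S : Finset (Fin (n + 1))) (c : ZMod p)
    (ψ : AddChar (ZModPowProd p n) ℂ) :
    ∑ g ∈ dualTile S c, ψ g =
      (∑ b ∈ digitSet p S, ψ (1, 0) ^ b) * ∑ j ∈ range p, ψ (slopeShift c) ^ j := by
  rw [dualTile, Finset.sum_image (injOn_dualTile S c), Finset.sum_mul_sum, Finset.sum_product]
  simp only [AddChar.map_add_eq_mul, AddChar.map_nsmul_eq_pow]

lemma geom_sum_apply_slopeShift_eq_zero {ψ : AddChar (ZModPowProd p n) ℂ}
    {c : ZMod p} (hψ : ψ (slopeShift c) ≠ 1) :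
    ∑ j ∈ range p, ψ (slopeShift c) ^ j = 0 := by
  rw [geom_sum_eq hψ, ψ.apply_slopeShift_pow, sub_self, zero_div]

lemma image_add_slopeShift_dualTile (S : Finset (Fin (n + 1))) (c : ZMod p) :
    (dualTile S c).image (· + slopeShift c) = dualTile S c :=
  Finset.image_add_right_eq_self_of_sum_addChar fun ψ hψ => by
    rw [sum_addChar_dualTile, geom_sum_apply_slopeShift_eq_zero hψ, mul_zero]

lemma sum_addChar_dualTile_eq_zero {A : Finset (ZModPowProd p n)}
    {S : Finset (Fin (n + 1))} {c₀ c₁ : ZMod p}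
    (hS : ∀ i : Fin (n + 1), (i : ℕ) < n →
      cyclotomic (p ^ ((i : ℕ) + 1)) ℤ ∣ slopePoly c₀ A → i ∈ S)
    (hc₁ : ¬ cyclotomic (p ^ (n + 1)) ℤ ∣ slopePoly c₁ A)
    {ψ : AddChar (ZModPowProd p n) ℂ} (hψ : ψ ≠ 0) (hA : ∑ g ∈ A, ψ g = 0) :
    ∑ g ∈ dualTile S c₁, ψ g = 0 := by
  rw [sum_addChar_dualTile]
  by_cases hψc₁ : ψ (slopeShift c₁) = 1
  swap
  · rw [geom_sum_apply_slopeShift_eq_zero hψc₁, mul_zero]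
  rw [ψ.apply_slopeShift_eq_one_iff] at hψc₁
  -- If `ψ (1, 0) ^ p ^ n ≠ 1`, slope `c₁` contradicts `hc₁`; otherwise it forces
  -- `ψ (0, 1) = 1`, so slope `c₀` fits as well.
  by_cases hξ : ψ (1, 0) ^ p ^ n = 1
  swap
  · obtain ⟨hprim, -⟩ := ψ.exists_slope hξ
    rw [sum_addChar_eq_aeval_slopePoly A hψc₁,
      ← hprim.cyclotomic_dvd_iff_aeval_eq_zero (pow_pos (NeZero.pos p) _)] at hA
    exact absurd hA hc₁
  have hc₀ : ψ (0, 1) = ψ (1, 0) ^ (p ^ n * c₀.val) := by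
    rw [hψc₁, pow_mul, pow_mul, hξ, one_pow, one_pow]
  have hξ1 : ψ (1, 0) ≠ 1 := fun h1 =>
    hψ (AddChar.ext_iff.2 fun g => by rw [ψ.apply_prod_zmod, hc₀, h1]; simp)
  obtain ⟨i, hi, hprim⟩ := IsPrimitiveRoot.exists_of_pow_prime_pow_eq_one hξ hξ1
  have hdvd : cyclotomic (p ^ (i + 1)) ℤ ∣ slopePoly c₀ A := by
    rw [hprim.cyclotomic_dvd_iff_aeval_eq_zero (pow_pos (NeZero.pos p) _),
      ← sum_addChar_eq_aeval_slopePoly A hc₀, hA]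
  rw [sum_pow_digitSet_eq_zero (Fact.out : p.Prime).one_lt (hS ⟨i, by omega⟩ hi hdvd)
    (hprim.pow (pow_pos (NeZero.pos p) _) (pow_succ p i)), zero_mul]

lemma pow_nsmul_one_zero_ne_zero : p ^ n • ((1, 0) : ZModPowProd p n) ≠ 0 := by
  rw [Prod.smul_mk, Ne, Prod.mk_eq_zero, nsmul_eq_mul, mul_one, ZMod.natCast_eq_zero_iff,
    Nat.pow_dvd_pow_iff_le_right (Fact.out : p.Prime).one_lt]
  omega

lemma uniformlyPeriodic_of_forall_not_cyclotomic_dvd {A : Finset (ZModPowProd p n)}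
    (hA : ∀ c, ¬ cyclotomic (p ^ (n + 1)) ℤ ∣ slopePoly c A) :
    UniformlyPeriodic (A : Set (ZModPowProd p n)) := by
  refine ⟨p ^ n • (1, 0), pow_nsmul_one_zero_ne_zero, fun T hT => ?_⟩
  obtain ⟨B, rfl⟩ := (Set.toFinite T).exists_finset_coe
  rw [← Finset.coe_image, hT.image_add_right_eq_self]
  intro ψ hψ
  rw [AddChar.map_nsmul_eq_pow] at hψ
  obtain ⟨c, hc⟩ := ψ.exists_slope_sum_eq_zero_iff hψ A
  exact hc.not.2 (hA c)

lemma image_add_eq_self_of_forall_cyclotomic_dvd {A : Finset (ZModPowProd p n)}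
    (hA : ∀ c, cyclotomic (p ^ (n + 1)) ℤ ∣ slopePoly c A) :
    (fun a => a + p ^ n • (1, 0)) '' (A : Set (ZModPowProd p n)) = A := by
  rw [← Finset.coe_image, Finset.image_add_right_eq_self_of_sum_addChar]
  intro ψ hψ
  rw [AddChar.map_nsmul_eq_pow] at hψ
  obtain ⟨c, hc⟩ := ψ.exists_slope_sum_eq_zero_iff hψ A
  exact hc.2 (hA c)

lemma exists_digit_positions {A B : Finset (ZModPowProd p n)}
    (hT : IsTilingPair (A : Set (ZModPowProd p n)) B) {c : ZMod p}
    (hc : cyclotomic (p ^ (n + 1)) ℤ ∣ slopePoly c A) :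
    ∃ S : Finset (Fin (n + 1)),
      (∀ i : Fin (n + 1), (i : ℕ) < n →
        cyclotomic (p ^ ((i : ℕ) + 1)) ℤ ∣ slopePoly c A → i ∈ S) ∧ p ^ #S * p = #A := by
  classical
  have hp := (Fact.out : p.Prime)
  set V : Finset (Fin (n + 1)) := {i | cyclotomic (p ^ ((i : ℕ) + 1)) ℤ ∣ slopePoly c A}
  have hlast : Fin.last n ∈ V := by simpa [V] using hc
  have hV : p ^ #V ∣ #A := by
    have := pow_card_dvd_eval_one_of_cyclotomic_dvd (p := p) (S := V.map Fin.valEmbedding)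
      (P := slopePoly c A) (by simp [V])
    rw [card_map, slopePoly_eval_one] at this
    exact_mod_cast this
  have hAG : #A ∣ p ^ (n + 2) := Dvd.intro _ (by
    rw [hT.card_mul_card, Fintype.card_prod, ZMod.card, ZMod.card, ← pow_succ])
  obtain ⟨a, ha, hAa⟩ := (Nat.dvd_prime_pow hp).1 hAG
  have hVa : #V ≤ a := (Nat.pow_dvd_pow_iff_le_right hp.one_lt).1 (hAa ▸ hV)
  have hV0 : 0 < #V := Finset.card_pos.2 ⟨_, hlast⟩
  obtain ⟨S, hVS, -, hS⟩ := Finset.exists_subsuperset_card_eq (V.erase (Fin.last n)).subset_univ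
    (n := a - 1) (by rw [card_erase_of_mem hlast]; omega) (by simp; omega)
  refine ⟨S, fun i hi hdvd => hVS (mem_erase.2 ⟨fun h => ?_, by simpa [V] using hdvd⟩), ?_⟩
  · rw [h, Fin.val_last] at hi
    exact lt_irrefl n hi
  · rw [hS, hAa, ← pow_succ]
    congr 1
    omega

lemma dualUniformlyPeriodic_of_cyclotomic_dvd_of_not_dvd
    {A B : Finset (ZModPowProd p n)} (hT : IsTilingPair (A : Set (ZModPowProd p n)) B)
    {c₀ c₁ : ZMod p} (hc₀ : cyclotomic (p ^ (n + 1)) ℤ ∣ slopePoly c₀ A)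
    (hc₁ : ¬ cyclotomic (p ^ (n + 1)) ℤ ∣ slopePoly c₁ A) :
    DualUniformlyPeriodic (A : Set (ZModPowProd p n)) := by
  obtain ⟨S, hS, hcard⟩ := exists_digit_positions hT hc₀
  refine dualUniformlyPeriodic_of_forall_isTilingPair (Ω' := dualTile S c₁) ⟨B, hT⟩
    (slopeShift_ne_zero c₁) (by rw [← Finset.coe_image, image_add_slopeShift_dualTile])
    fun T hT' => ?_
  obtain ⟨T, rfl⟩ := (Set.toFinite T).exists_finset_coe
  exact hT'.of_sum_addChar_eq_zero (by rw [card_dualTile, hcard])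
    fun ψ hψ hA => sum_addChar_dualTile_eq_zero hS hc₁ hψ hA

end ZModPowProd

/-- For every prime `p` and `n ≥ 1`, the group `Z_{p^n} × Z_p` has the UPT
property. -/
theorem hasUPT_zmod_pow_prod (p : ℕ) (hp : p.Prime) (n : ℕ) (hn : 1 ≤ n) :
    HasUPT (ZMod (p ^ n) × ZMod p) := by
  have := Fact.mk hp
  obtain ⟨n, rfl⟩ := Nat.exists_eq_add_of_le' hn
  rintro Ω ⟨T, hT⟩
  obtain ⟨A, rfl⟩ := (Set.toFinite Ω).exists_finset_coe
  obtain ⟨B, rfl⟩ := (Set.toFinite T).exists_finset_coe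
  by_cases h₀ : ∀ c, ¬ cyclotomic (p ^ (n + 1)) ℤ ∣ slopePoly c A
  · exact .inl (uniformlyPeriodic_of_forall_not_cyclotomic_dvd h₀)
  obtain ⟨c₀, hc₀⟩ := not_forall_not.1 h₀
  by_cases h₁ : ∀ c, cyclotomic (p ^ (n + 1)) ℤ ∣ slopePoly c A
  · exact .inr (dualUniformlyPeriodic_of_forall_isTilingPair ⟨B, hT⟩ pow_nsmul_one_zero_ne_zero
      (image_add_eq_self_of_forall_cyclotomic_dvd h₁) fun _ h => h)
  obtain ⟨c₁, hc₁⟩ := not_forall.1 h₁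
  exact .inr (dualUniformlyPeriodic_of_cyclotomic_dvd_of_not_dvd hT hc₀ hc₁)
end

section
/- Let p be a prime and let Ω be a non-trivial tile of the group G = (Z_p)^3 (i.e., 1 < |Ω| < p^3) with 0 ∈ Ω. Then there exists a subgroup Ω' of G such that (Ω', T) is a tiling pair of G for every tiling complement T ∈ 𝒯_Ω. -/
open Finset Polynomial

section RootsOfUnity

variable {p : ℕ} [Fact p.Prime]

theorem IsPrimitiveRoot.eq_of_sum_mul_pow_val_eq_zero {L : Type*} [Field L] [CharZero L]
    {ζ : L} (hζ : IsPrimitiveRoot ζ p) {c : ZMod p → ℚ} (h : ∑ j, (c j : L) * ζ ^ j.val = 0)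
    (i j : ZMod p) : c i = c j := by
  have hp : p.Prime := Fact.out
  set P : ℚ[X] := ∑ j, C (c j) * X ^ j.val
  have hP : aeval ζ P = 0 := by simpa [P] using h
  have hdvd : cyclotomic p ℚ ∣ P := cyclotomic_eq_minpoly_rat hζ hp.pos ▸ minpoly.dvd ℚ ζ hP
  have hdeg : P.natDegree ≤ (cyclotomic p ℚ).natDegree := by
    rw [natDegree_cyclotomic, Nat.totient_prime hp]
    refine natDegree_sum_le_of_forall_le _ _ fun j _ => (natDegree_C_mul_X_pow_le _ _).trans ?_
    have := ZMod.val_lt j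
    omega
  have hcoeff (j : ZMod p) : c j = P.leadingCoeff := by
    have := congr_arg (coeff · j.val)
      (eq_leadingCoeff_mul_of_monic_of_dvd_of_natDegree_le (cyclotomic.monic p ℚ) hdvd hdeg)
    simpa [P, cyclotomic_prime, finsetSum_coeff, coeff_X_pow, ZMod.val_lt,
      (ZMod.val_injective p).eq_iff] using this
  rw [hcoeff i, hcoeff j]

theorem ZMod.forall_eq_of_sum_mul_sub_eq_const {a b : ZMod p → ℕ} {K : ℕ}
    (hab : ∀ c, ∑ j, a j * b (c - j) = K) (ha : ¬ ∀ i j, a i = a j) : ∀ i j, b i = b j := by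
  have hp : p.Prime := Fact.out
  have hζ := Complex.isPrimitiveRoot_exp p hp.ne_zero
  set ζ := Complex.exp (2 * Real.pi * Complex.I / p)
  set e : ZMod p → ℂ := fun j => ζ ^ j.val
  have he (i j : ZMod p) : e (i + j) = e i * e j := by
    have := pow_mod_orderOf ζ (i.val + j.val)
    rwa [← hζ.eq_orderOf, ← ZMod.val_add, pow_add] at this
  have hsum : ∑ j, e j = 0 := by
    have hshift : ∑ j, e j = e 1 * ∑ j, e j := by
      rw [mul_sum, ← Equiv.sum_comp (Equiv.addLeft 1)]
      simp [he]
    have h1 : e 1 ≠ 1 := by simpa [e, ZMod.val_one] using hζ.ne_one hp.one_lt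
    by_contra hS
    exact h1 ((mul_eq_right₀ hS).1 hshift.symm)
  have hprod : (∑ i, (a i : ℂ) * e i) * (∑ j, (b j : ℂ) * e j) = 0 := by
    calc _ = ∑ i, ∑ c, (a i * b (c - i) : ℂ) * e c := by
          rw [sum_mul_sum]
          refine sum_congr rfl fun i _ => ?_
          rw [← Equiv.sum_comp (Equiv.subRight i)]
          refine sum_congr rfl fun c _ => ?_
          simp only [Equiv.subRight_apply]
          rw [show c = i + (c - i) by abel, he, add_sub_cancel_left]
          ring
      _ = K * ∑ c, e c := by
          rw [sum_comm, mul_sum]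
          refine sum_congr rfl fun c _ => ?_
          rw [← sum_mul, ← hab c]
          push_cast
          rfl
      _ = 0 := by rw [hsum, mul_zero]
  rcases mul_eq_zero.1 hprod with h | h
  · refine (ha fun i j => ?_).elim
    exact_mod_cast hζ.eq_of_sum_mul_pow_val_eq_zero (c := fun j => (a j : ℚ)) (by simpa using h) i j
  · intro i j
    exact_mod_cast hζ.eq_of_sum_mul_pow_val_eq_zero (c := fun j => (b j : ℚ)) (by simpa using h) i j

end RootsOfUnity

section Equidistribution

variable {X Y : Type*} [DecidableEq Y]

def IsEquidistributed (s : Finset X) (f : X → Y) : Prop :=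
  ∀ y y', #{x ∈ s | f x = y} = #{x ∈ s | f x = y'}

theorem IsEquidistributed.card_mul_card_filter [Fintype Y] {s : Finset X} {f : X → Y}
    (h : IsEquidistributed s f) (y : Y) : Fintype.card Y * #{x ∈ s | f x = y} = #s := by
  rw [card_eq_sum_card_fiberwise (s := s) (f := f) (t := univ) fun _ _ => mem_univ _,
    sum_congr rfl fun y' _ => h y' y, sum_const, card_univ, smul_eq_mul]

theorem isEquidistributed_univ_of_surjective {G H : Type*} [AddGroup G] [Fintype G] [AddGroup H]
    [DecidableEq H] {f : G →+ H} (hf : Function.Surjective f) : IsEquidistributed univ f :=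
  fun y y' => AddMonoidHom.card_fiber_eq_of_mem_range f (hf y) (hf y')

theorem not_isEquidistributed_id [DecidableEq X] [Fintype X] {s : Finset X} (hs : s.Nonempty)
    (hs' : s ≠ univ) : ¬ IsEquidistributed s fun x => x := by
  obtain ⟨x, hx⟩ := hs
  obtain ⟨x', hx'⟩ : ∃ x', x' ∉ s := by simpa [eq_univ_iff_forall] using hs'
  intro h
  simpa [filter_eq', hx, hx'] using h x x'

theorem not_isEquidistributed_of_card_eq [Fintype Y] {s : Finset X} {f : X → Y}
    (hs : #s = Fintype.card Y) {x x' : X} (hx : x ∈ s) (hx' : x' ∈ s) (hne : x ≠ x')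
    (hf : f x = f x') : ¬ IsEquidistributed s f := by
  classical
  intro h
  have hfiber := h.card_mul_card_filter (f x)
  have hpair : 2 ≤ #{z ∈ s | f z = f x} := by
    rw [← card_pair hne]
    exact card_le_card fun z hz => by
      rcases mem_insert.1 hz with rfl | hz
      · exact mem_filter.2 ⟨hx, rfl⟩
      · rw [mem_singleton.1 hz]; exact mem_filter.2 ⟨hx', hf.symm⟩
  have hpos : 0 < Fintype.card Y := hs ▸ card_pos.2 ⟨x, hx⟩
  nlinarith

theorem prime_mul_card_filter_dual_apply_eq_zero {p : ℕ} [Fact p.Prime] {V : Type*}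
    [AddCommGroup V] [Module (ZMod p) V] [Fintype (Module.Dual (ZMod p) V)] {z : V} (hz : z ≠ 0) :
    p * #{φ : Module.Dual (ZMod p) V | φ z = 0} = Fintype.card (Module.Dual (ZMod p) V) := by
  obtain ⟨φ, hφ⟩ : ∃ φ : Module.Dual (ZMod p) V, φ z ≠ 0 := by
    simpa using (Module.forall_dual_apply_eq_zero_iff (ZMod p) z).not.2 hz
  have hev : Function.Surjective (Module.Dual.eval (ZMod p) V z) :=
    LinearMap.surjective fun h0 => hφ (by simpa using LinearMap.congr_fun h0 φ)
  have := (isEquidistributed_univ_of_surjective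
    (f := (Module.Dual.eval (ZMod p) V z).toAddMonoidHom) hev).card_mul_card_filter 0
  rwa [ZMod.card] at this

theorem isEquidistributed_of_forall_dual {p : ℕ} [Fact p.Prime] {V : Type*} [AddCommGroup V]
    [Module (ZMod p) V] [Finite V] [DecidableEq V] {s : Finset X} {ψ : X → V}
    (h : ∀ φ : Module.Dual (ZMod p) V, φ ≠ 0 → IsEquidistributed s fun x => φ (ψ x)) :
    IsEquidistributed s ψ := by
  classical
  have : Finite (Module.Dual (ZMod p) V) := Finite.of_injective _ DFunLike.coe_injective
  have := Fintype.ofFinite (Module.Dual (ZMod p) V)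
  set Q := Fintype.card (Module.Dual (ZMod p) V)
  suffices hv : ∀ v, Q * #{x ∈ s | ψ x = v} = #s from
    fun v w => Nat.eq_of_mul_eq_mul_left Fintype.card_pos ((hv v).trans (hv w).symm)
  intro v
  -- Count the pairs `(φ, x)` with `φ (ψ x) = φ v` in two ways.
  have hdouble : ∑ φ : Module.Dual (ZMod p) V, #{x ∈ s | φ (ψ x) = φ v}
      = ∑ x ∈ s, #{φ : Module.Dual (ZMod p) V | φ (ψ x) = φ v} := by
    simp only [card_filter]
    exact sum_comm
  have hlhs : p * ∑ φ : Module.Dual (ZMod p) V, #{x ∈ s | φ (ψ x) = φ v}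
      = p * #s + (Q - 1) * #s := by
    have hterm : ∀ φ ∈ (univ : Finset (Module.Dual (ZMod p) V)).erase 0,
        p * #{x ∈ s | φ (ψ x) = φ v} = #s := fun φ hφ => by
      simpa [ZMod.card] using (h φ (ne_of_mem_erase hφ)).card_mul_card_filter (φ v)
    rw [mul_sum, ← add_sum_erase _ _ (mem_univ 0), sum_congr rfl hterm, sum_const,
      card_erase_of_mem (mem_univ _), card_univ, smul_eq_mul]
    simp [Q]
  have hrhs : p * ∑ x ∈ s, #{φ : Module.Dual (ZMod p) V | φ (ψ x) = φ v}
      = p * Q * #{x ∈ s | ψ x = v} + Q * #{x ∈ s | ¬ ψ x = v} := by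
    have hon : ∀ x ∈ s.filter (ψ · = v), p * #{φ : Module.Dual (ZMod p) V | φ (ψ x) = φ v}
        = p * Q := fun x hx => by simp [(mem_filter.1 hx).2, Q]
    have hoff : ∀ x ∈ s.filter (¬ ψ · = v), p * #{φ : Module.Dual (ZMod p) V | φ (ψ x) = φ v}
        = Q := fun x hx => by
      simpa [sub_eq_zero] using
        prime_mul_card_filter_dual_apply_eq_zero (p := p) (sub_ne_zero.2 (mem_filter.1 hx).2)
    rw [mul_sum, ← sum_filter_add_sum_filter_not s (ψ · = v), sum_congr rfl hon,
      sum_congr rfl hoff, sum_const, sum_const, smul_eq_mul, smul_eq_mul]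
    ring
  have hsplit := card_filter_add_card_filter_not (s := s) (p := (ψ · = v))
  have hQ : 1 ≤ Q := Fintype.card_pos
  have hp : (p : ℤ) - 1 ≠ 0 := by
    have := (Fact.out : p.Prime).two_le
    omega
  rw [hdouble, hrhs] at hlhs
  zify [hQ] at hlhs hsplit ⊢
  have : ((p : ℤ) - 1) * (Q * #{x ∈ s | ψ x = v} - #s) = 0 := by
    linear_combination hlhs - Q * hsplit
  linarith [(mul_eq_zero.1 this).resolve_left hp]

end Equidistribution

theorem AddMonoidHom.card_ker_mul_card_of_surjective {G H : Type*} [AddGroup G] [AddGroup H]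
    {f : G →+ H} (hf : Function.Surjective f) : Nat.card f.ker * Nat.card H = Nat.card G := by
  rw [← f.ker.card_mul_index, AddSubgroup.index_ker, f.range_eq_top.2 hf, AddSubgroup.card_top]

theorem isTilingPair_ker_of_card_filter_eq_one {G H : Type*} [AddCommGroup G] [AddCommGroup H]
    [DecidableEq H] (ψ : G →+ H) {B : Finset G} (hB : ∀ y, #{b ∈ B | ψ b = y} = 1) :
    IsTilingPair (ψ.ker : Set G) B := by
  intro g
  obtain ⟨t, ht⟩ := card_eq_one.1 (hB (ψ g))
  have key : ∀ t', t' ∈ B ∧ ψ t' = ψ g ↔ t' = t := by simpa [Finset.ext_iff] using ht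
  obtain ⟨htB, htg⟩ := (key t).2 rfl
  refine ⟨(g - t, t), ⟨by simp [htg], htB, sub_add_cancel g t⟩, ?_⟩
  rintro ⟨x, t'⟩ ⟨hx, ht', rfl⟩
  obtain rfl : t' = t := (key t').1 ⟨ht', by rw [map_add, ψ.mem_ker.1 hx, zero_add]⟩
  simp

namespace IsTilingPair

variable {G : Type*} [AddCommGroup G] [Fintype G] {A B : Finset G}

theorem card_filter_add (h : IsTilingPair (A : Set G) B) (P : G → Prop) [DecidablePred P] :
    #{q ∈ A ×ˢ B | P (q.1 + q.2)} = #{g | P g} := by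
  refine card_nbij (fun q => q.1 + q.2) (fun q hq => ?_) (fun q hq q' hq' hqq' => ?_) fun g hg => ?_
  · simp only [coe_filter, mem_product, Set.mem_ofPred_eq, mem_univ, true_and] at hq ⊢
    exact hq.2
  · simp only [coe_filter, mem_product, Set.mem_ofPred_eq] at hq hq'
    exact (h _).unique ⟨hq.1.1, hq.1.2, rfl⟩ ⟨hq'.1.1, hq'.1.2, hqq'.symm⟩
  · simp only [coe_filter, mem_univ, true_and, Set.mem_ofPred_eq] at hg
    obtain ⟨q, ⟨hq₁, hq₂, rfl⟩, -⟩ := h g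
    exact ⟨q, by simpa using ⟨⟨hq₁, hq₂⟩, hg⟩, rfl⟩

theorem card_mul (h : IsTilingPair (A : Set G) B) : #A * #B = Fintype.card G := by
  simpa using h.card_filter_add fun _ => True

theorem sum_card_filter_mul {H : Type*} [AddCommGroup H] [Fintype H] [DecidableEq H]
    (h : IsTilingPair (A : Set G) B) (χ : G →+ H) (c : H) :
    ∑ j, #{a ∈ A | χ a = j} * #{b ∈ B | χ b = c - j} = #{g | χ g = c} := by
  rw [← h.card_filter_add fun g => χ g = c,
    card_eq_sum_card_fiberwise (f := fun q => χ q.1) (t := univ) fun _ _ => mem_univ _]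
  refine sum_congr rfl fun j _ => ?_
  rw [← card_product, ← filter_product, filter_filter]
  congr 1
  refine filter_congr fun q _ => ?_
  rw [map_add, eq_sub_iff_add_eq']
  constructor
  · rintro ⟨hj, hc⟩; exact ⟨by rw [hj, hc], hj⟩
  · rintro ⟨hc, hj⟩; exact ⟨hj, by rw [← hj, hc]⟩

theorem isEquidistributed_right_of_not_left {p : ℕ} [Fact p.Prime] (h : IsTilingPair (A : Set G) B)
    {χ : G →+ ZMod p} (hχ : Function.Surjective χ) (hA : ¬ IsEquidistributed A χ) :
    IsEquidistributed B χ :=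
  ZMod.forall_eq_of_sum_mul_sub_eq_const (K := #{g | χ g = 0})
    (fun c => (h.sum_card_filter_mul χ c).trans (isEquidistributed_univ_of_surjective hχ c 0)) hA

theorem isTilingPair_ker {H : Type*} [AddCommGroup H] [Fintype H] [DecidableEq H]
    (h : IsTilingPair (A : Set G) B) {ψ : G →+ H} (hψ : Function.Surjective ψ)
    (hker : Nat.card ψ.ker = #A) (hB : IsEquidistributed B ψ) : IsTilingPair (ψ.ker : Set G) B := by
  have hcard := AddMonoidHom.card_ker_mul_card_of_surjective hψ
  rw [hker, Nat.card_eq_fintype_card, Nat.card_eq_fintype_card, ← h.card_mul] at hcard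
  have hA : 0 < #A := by
    obtain ⟨q, ⟨hq, -⟩, -⟩ := h 0
    exact card_pos.2 ⟨q.1, hq⟩
  have hBH : #B = Fintype.card H := (Nat.eq_of_mul_eq_mul_left hA hcard).symm
  refine isTilingPair_ker_of_card_filter_eq_one ψ fun y => ?_
  have hy := hB.card_mul_card_filter y
  rw [← hBH] at hy
  exact Nat.eq_of_mul_eq_mul_left (hBH ▸ Fintype.card_pos) (hy.trans (mul_one _).symm)

end IsTilingPair

section VectorSpace

variable {p : ℕ} [Fact p.Prime] {G : Type*} [AddCommGroup G] [Module (ZMod p) G] [Fintype G]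

theorem exists_addSubgroup_isTilingPair_of_card_mul_prime {A : Finset G}
    (hA : #A * p = Fintype.card G) :
    ∃ H : AddSubgroup G, ∀ T : Set G, IsTilingPair (A : Set G) T → IsTilingPair (H : Set G) T := by
  classical
  have hp := (Fact.out : p.Prime).one_lt
  obtain ⟨φ, hφ, hAφ⟩ : ∃ φ : Module.Dual (ZMod p) G, φ ≠ 0 ∧ ¬ IsEquidistributed A φ := by
    by_contra! hall
    refine not_isEquidistributed_id (s := A) ?_ ?_ (isEquidistributed_of_forall_dual hall)
    · exact card_pos.1 (by nlinarith [Fintype.card_pos (α := G)])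
    · rintro rfl
      rw [card_univ] at hA
      nlinarith [Fintype.card_pos (α := G)]
  have hsurj : Function.Surjective φ.toAddMonoidHom := LinearMap.surjective hφ
  refine ⟨φ.toAddMonoidHom.ker, fun T hT => ?_⟩
  obtain ⟨B, rfl⟩ := T.toFinite.exists_finset_coe
  refine hT.isTilingPair_ker hsurj ?_ (hT.isEquidistributed_right_of_not_left hsurj hAφ)
  have hker := AddMonoidHom.card_ker_mul_card_of_surjective hsurj
  rw [Nat.card_zmod, Nat.card_eq_fintype_card (α := G), ← hA] at hker
  exact Nat.eq_of_mul_eq_mul_right (by omega) hker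

theorem exists_addSubgroup_isTilingPair_of_card_eq_prime {A : Finset G} (hA : #A = p) :
    ∃ H : AddSubgroup G, ∀ T : Set G, IsTilingPair (A : Set G) T → IsTilingPair (H : Set G) T := by
  classical
  obtain ⟨a, ha, a', ha', hne⟩ := one_lt_card.1 (hA ▸ (Fact.out : p.Prime).one_lt)
  set W := (ZMod p) ∙ (a - a')
  have : Finite (G ⧸ W) := Finite.of_surjective _ W.mkQ_surjective
  have := Fintype.ofFinite (G ⧸ W)
  refine ⟨W.mkQ.toAddMonoidHom.ker, fun T hT => ?_⟩
  obtain ⟨B, rfl⟩ := T.toFinite.exists_finset_coe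
  refine hT.isTilingPair_ker (ψ := W.mkQ.toAddMonoidHom) W.mkQ_surjective ?_ ?_
  · have hker : W.mkQ.toAddMonoidHom.ker = W.toAddSubgroup := by ext; simp
    rw [hker, hA]
    exact (Nat.card_congr
      (LinearEquiv.toSpanNonzeroSingleton (ZMod p) G _ (sub_ne_zero.2 hne)).toEquiv.symm).trans
      (Nat.card_zmod p)
  · refine isEquidistributed_of_forall_dual (p := p) fun φ hφ => ?_
    have hsurj : Function.Surjective (φ ∘ₗ W.mkQ).toAddMonoidHom :=
      (LinearMap.surjective hφ).comp W.mkQ_surjective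
    refine hT.isEquidistributed_right_of_not_left hsurj
      (not_isEquidistributed_of_card_eq (by rw [hA, ZMod.card]) ha ha' hne ?_)
    simpa using congr_arg φ ((Submodule.Quotient.eq W).2 (Submodule.mem_span_singleton_self _))

end VectorSpace

theorem tile_replaced_by_subgroup_general (p : ℕ) (hp : p.Prime)
    (Ω : Set (Fin 3 → ZMod p))
    (hcard : 1 < Ω.ncard ∧ Ω.ncard < p ^ 3) (htile : IsTile Ω) :
    ∃ Ω' : AddSubgroup (Fin 3 → ZMod p),
      ∀ T : Set (Fin 3 → ZMod p), IsTilingPair Ω T →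
        IsTilingPair (Ω' : Set (Fin 3 → ZMod p)) T := by
  have := Fact.mk hp
  obtain ⟨A, rfl⟩ := Ω.toFinite.exists_finset_coe
  obtain ⟨T, hT⟩ := htile
  obtain ⟨B, rfl⟩ := T.toFinite.exists_finset_coe
  rw [Set.ncard_coe_finset] at hcard
  have hG : Fintype.card (Fin 3 → ZMod p) = p ^ 3 := by simp
  obtain ⟨k, hk, hAk⟩ := (Nat.dvd_prime_pow hp).1 (Dvd.intro _ (hT.card_mul.trans hG))
  interval_cases k
  · simp [hAk] at hcard
  · exact exists_addSubgroup_isTilingPair_of_card_eq_prime (hAk.trans (pow_one p))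
  · exact exists_addSubgroup_isTilingPair_of_card_mul_prime (by rw [hAk, hG]; ring)
  · omega

/-- Every non-trivial tile `Ω` of `(Z_p)^3` containing `0` can be replaced by
a subgroup `Ω'` which is a tiling complement of every tiling complement of
`Ω`. -/
theorem tile_replaced_by_subgroup (p : ℕ) (hp : p.Prime)
    (Ω : Set (Fin 3 → ZMod p)) (h0 : (0 : Fin 3 → ZMod p) ∈ Ω)
    (hcard : 1 < Ω.ncard ∧ Ω.ncard < p ^ 3) (htile : IsTile Ω) :
    ∃ Ω' : AddSubgroup (Fin 3 → ZMod p),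
      ∀ T : Set (Fin 3 → ZMod p), IsTilingPair Ω T →
        IsTilingPair (Ω' : Set (Fin 3 → ZMod p)) T :=
  tile_replaced_by_subgroup_general p hp Ω hcard htile
end
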